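/- arXiv:2109.08431 — 6 statements merged into one kernel-verified Lean document; each statement's English description precedes it below -/
import Mathlib

section
/- Let n ≥ 1 and let (a_n, a_{n-1}, …, a_1) be a vector of nonnegative integers with a_n ≠ 0 and gcd(a_n, a_{n-1}, …, a_1) = 1, and set P(x) = a_n x^n + a_{n-1} x^{n-1} + ⋯ + a_1 x. Then S(a_n, …, a_1) ⊆ V(a_n, …, a_1) ∩ S(1); that is, if (a,b) ∈ ℕ² satisfies gcd(P(a), b) = 1, then gcd(a,b) = 1 and (a,b) is F(a_n,…,a_1)-visible. -/
/-- A point `(a, b)` of `ℕ²` (with `1 ≤ a`, `1 ≤ b`) is `F(aₙ,…,a₁)`-visible for the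
polynomial `P(x) = aₙ xⁿ + ⋯ + a₁ x` if `b = q · P(a)` for some positive rational `q` and
there is no lattice point `(a', b') ∈ ℕ²` with `a' < a` lying on the curve `y = q · P(x)`. -/
def FVisible (P : ℕ → ℕ) (a b : ℕ) : Prop :=
  1 ≤ a ∧ 1 ≤ b ∧
    ∃ q : ℚ, 0 < q ∧ (b : ℚ) = q * (P a : ℚ) ∧
      ∀ a' b' : ℕ, 1 ≤ a' → a' < a → 1 ≤ b' → (b' : ℚ) ≠ q * (P a' : ℚ)

theorem stmt_0 (n : ℕ) (hn : 1 ≤ n) (a : ℕ → ℕ) (han : a n ≠ 0)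
    (hgcd : (Finset.Icc 1 n).gcd a = 1)
    (P : ℕ → ℕ) (hP : ∀ x, P x = ∑ i ∈ Finset.Icc 1 n, a i * x ^ i)
    (a₀ b : ℕ) (ha₀ : 1 ≤ a₀) (hb : 1 ≤ b)
    (hS : Nat.gcd (P a₀) b = 1) :
    Nat.gcd a₀ b = 1 ∧ FVisible P a₀ b := by
  have hmem : n ∈ Finset.Icc 1 n := Finset.mem_Icc.mpr ⟨hn, le_rfl⟩
  -- positivity of P at positive points
  have hPpos : ∀ x : ℕ, 1 ≤ x → 0 < P x := by
    intro x hx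
    rw [hP]
    have : 0 < a n * x ^ n :=
      Nat.mul_pos (Nat.pos_of_ne_zero han) (Nat.pow_pos (n := n) hx)
    calc 0 < a n * x ^ n := this
      _ ≤ ∑ i ∈ Finset.Icc 1 n, a i * x ^ i :=
        Finset.single_le_sum (f := fun i => a i * x ^ i) (fun i _ => Nat.zero_le _) hmem
  -- strict monotonicity
  have hmono : ∀ x : ℕ, x < a₀ → P x < P a₀ := by
    intro x hx
    rw [hP, hP]
    apply Finset.sum_lt_sum
    · intro i _
      exact Nat.mul_le_mul_left _ (Nat.pow_le_pow_left (le_of_lt hx) i)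
    · refine ⟨n, hmem, ?_⟩
      exact mul_lt_mul_of_pos_left
        (Nat.pow_lt_pow_left hx (Nat.one_le_iff_ne_zero.mp hn)) (Nat.pos_of_ne_zero han)
  -- a₀ divides P a₀
  have hdvd : a₀ ∣ P a₀ := by
    rw [hP]
    apply Finset.dvd_sum
    intro i hi
    have hi1 : 1 ≤ i := (Finset.mem_Icc.mp hi).1
    exact Dvd.dvd.mul_left (dvd_pow_self a₀ (Nat.one_le_iff_ne_zero.mp hi1)) _
  have hgab : Nat.gcd a₀ b = 1 := by
    have : Nat.gcd a₀ b ∣ Nat.gcd (P a₀) b :=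
      Nat.dvd_gcd ((Nat.gcd_dvd_left a₀ b).trans hdvd) (Nat.gcd_dvd_right a₀ b)
    rw [hS] at this
    exact Nat.eq_one_of_dvd_one this
  refine ⟨hgab, ha₀, hb, (b : ℚ) / (P a₀ : ℚ), ?_, ?_, ?_⟩
  · apply div_pos
    · exact_mod_cast hb
    · exact_mod_cast hPpos a₀ ha₀
  · rw [div_mul_cancel₀]
    exact_mod_cast (hPpos a₀ ha₀).ne'
  · intro a' b' ha'1 ha' hb' heq
    have hPa₀ : (0 : ℚ) < (P a₀ : ℚ) := by exact_mod_cast hPpos a₀ ha₀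
    have heq2 : (b' : ℚ) * (P a₀ : ℚ) = (b : ℚ) * (P a' : ℚ) := by
      field_simp at heq
      linarith [heq]
    have heqn : b' * P a₀ = b * P a' := by exact_mod_cast heq2
    have hdvd2 : P a₀ ∣ b * P a' := ⟨b', by rw [← heqn]; ring⟩
    have hcop : Nat.Coprime (P a₀) b := hS
    have : P a₀ ∣ P a' := hcop.dvd_of_dvd_mul_left hdvd2
    have hlt : P a' < P a₀ := hmono a' ha'
    have hpos' : 0 < P a' := hPpos a' ha'1
    exact absurd (Nat.le_of_dvd hpos' this) (not_le.mpr hlt)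
end

section
/- The density of the set S(1,1) = {(a,b) ∈ ℕ² : gcd(a² + a, b) = 1} exists and equals ∏_{p prime} (1 − 2/p²); consequently liminf_{N→∞} |V(1,1) ∩ [1,N]²| / N² ≥ ∏_{p prime} (1 − 2/p²). -/
set_option maxHeartbeats 1000000

/-- A point `(a, b)` of `ℕ²` (with `1 ≤ a`, `1 ≤ b`) is `F(1,1)`-visible for the
polynomial `P(x) = x² + x` if `b = q · P(a)` for some positive rational `q` and there is
no lattice point `(a', b') ∈ ℕ²` with `a' < a` lying on the curve `y = q · P(x)`. -/
def FVisible11 (a b : ℕ) : Prop :=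
  1 ≤ a ∧ 1 ≤ b ∧
    ∃ q : ℚ, 0 < q ∧ (b : ℚ) = q * ((a : ℚ) ^ 2 + a) ∧
      ∀ a' b' : ℕ, 1 ≤ a' → a' < a → 1 ≤ b' →
        (b' : ℚ) ≠ q * ((a' : ℚ) ^ 2 + a')

open Finset ArithmeticFunction Filter
open scoped ArithmeticFunction.Moebius ArithmeticFunction.zeta

namespace Stmt3Aux

noncomputable def Fp : ℕ × ℕ → ℝ := fun x =>
  if Nat.Coprime x.1 x.2 then ((μ x.1 : ℝ) * (μ x.2 : ℝ)) / ((x.1 : ℝ) * (x.2 : ℝ)) ^ 2 else 0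

lemma Fp_zero_left (n : ℕ) : Fp (0, n) = 0 := by
  unfold Fp
  split_ifs with h
  · have : n = 1 := (Nat.coprime_zero_left n).mp h
    subst this; simp
  · rfl

lemma Fp_zero_right (n : ℕ) : Fp (n, 0) = 0 := by
  unfold Fp
  split_ifs with h
  · have : n = 1 := (Nat.coprime_zero_right n).mp h
    subst this; simp
  · rfl

lemma abs_mu_le (n : ℕ) : |(μ n : ℝ)| ≤ 1 := by
  rw [← Int.cast_abs]
  exact_mod_cast @abs_moebius_le_one n

lemma Fp_abs_le (x : ℕ × ℕ) :
    |Fp x| ≤ (1 / (x.1 : ℝ) ^ 2) * (1 / (x.2 : ℝ) ^ 2) := by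
  rcases eq_or_ne x.1 0 with h1 | h1
  · have hx : x = (0, x.2) := by cases x; simp_all
    rw [hx, Fp_zero_left]; simp
  rcases eq_or_ne x.2 0 with h2 | h2
  · have hx : x = (x.1, 0) := by cases x; simp_all
    rw [hx, Fp_zero_right]; simp
  have hp1 : (0:ℝ) < (x.1:ℝ) := by positivity
  have hp2 : (0:ℝ) < (x.2:ℝ) := by positivity
  have hrhs : (1 / (x.1 : ℝ) ^ 2) * (1 / (x.2 : ℝ) ^ 2) = 1 / ((x.1:ℝ) * (x.2:ℝ)) ^ 2 := by
    rw [mul_pow]; rw [div_mul_div_comm]; ring_nf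
  rw [hrhs]
  unfold Fp
  split_ifs with h
  · rw [abs_div, abs_of_nonneg (a := ((x.1:ℝ) * (x.2:ℝ))^2) (by positivity)]
    gcongr
    calc |(μ x.1 : ℝ) * (μ x.2 : ℝ)| = |(μ x.1 : ℝ)| * |(μ x.2 : ℝ)| := abs_mul _ _
      _ ≤ 1 * 1 := mul_le_mul (abs_mu_le _) (abs_mu_le _) (abs_nonneg _) zero_le_one
      _ = 1 := one_mul 1
  · rw [abs_zero]; positivity

lemma summable_Fp_abs : Summable fun x : ℕ × ℕ => |Fp x| := by
  have hs : Summable fun n : ℕ => 1 / (n : ℝ) ^ 2 :=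
    Real.summable_one_div_nat_pow.mpr one_lt_two
  have hprod : Summable fun x : ℕ × ℕ => (1 / (x.1 : ℝ) ^ 2) * (1 / (x.2 : ℝ) ^ 2) :=
    hs.mul_of_nonneg hs (fun n => by positivity) (fun n => by positivity)
  exact Summable.of_norm_bounded hprod (fun x => by
    rw [Real.norm_eq_abs, abs_abs]; exact Fp_abs_le x)

lemma summable_Fp : Summable Fp := (summable_Fp_abs).of_abs

lemma Fp_support {x : ℕ × ℕ} (hx : Fp x ≠ 0) : x.1 ≠ 0 ∧ x.2 ≠ 0 := by
  constructor
  · rintro h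
    apply hx
    have : x = (0, x.2) := by cases x; simp_all
    rw [this]; exact Fp_zero_left _
  · rintro h
    apply hx
    have : x = (x.1, 0) := by cases x; simp_all
    rw [this]; exact Fp_zero_right _

noncomputable def g (n : ℕ) : ℝ := ∑ x ∈ n.divisorsAntidiagonal, Fp x

def e : (Σ n : ℕ, {x : ℕ × ℕ // x ∈ n.divisorsAntidiagonal}) → ℕ × ℕ := fun y => y.2.1

lemma e_injective : Function.Injective e := by
  rintro ⟨n, x, hx⟩ ⟨m, y, hy⟩ h
  simp only [e] at h
  have hn := Nat.mem_divisorsAntidiagonal.mp hx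
  have hm := Nat.mem_divisorsAntidiagonal.mp hy
  have hnm : n = m := by rw [← hn.1, ← hm.1, h]
  subst hnm
  have : (⟨x, hx⟩ : {x : ℕ × ℕ // x ∈ n.divisorsAntidiagonal}) = ⟨y, hy⟩ := Subtype.ext h
  rw [this]

lemma mem_range_e {x : ℕ × ℕ} (hx : Fp x ≠ 0) : x ∈ Set.range e := by
  obtain ⟨h1, h2⟩ := Fp_support hx
  exact ⟨⟨x.1 * x.2, ⟨x, Nat.mem_divisorsAntidiagonal.mpr ⟨rfl, by positivity⟩⟩⟩, rfl⟩

lemma summable_g_aux : Summable (fun n : ℕ => ∑ x ∈ n.divisorsAntidiagonal, |Fp x|) := by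
  have h1 : Summable ((fun x => |Fp x|) ∘ e) := by
    rw [Function.Injective.summable_iff e_injective]
    · exact summable_Fp_abs
    · intro x hx
      by_contra h
      have hne : Fp x ≠ 0 := fun h0 => h (by simp [h0])
      exact hx (mem_range_e hne)
  have h2 := h1.sigma
  refine h2.congr fun n => ?_
  exact (Finset.tsum_subtype (n.divisorsAntidiagonal) (fun x => |Fp x|))

lemma tsum_Fp_eq : ∑' x : ℕ × ℕ, Fp x = ∑' n, g n := by
  have hsupp : Function.support Fp ⊆ Set.range e := fun x hx => mem_range_e hx
  have hcomp : Summable (Fp ∘ e) := by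
    rw [Function.Injective.summable_iff e_injective (fun x hx => by
      by_contra h; exact hx (mem_range_e h))]
    exact summable_Fp
  rw [← Function.Injective.tsum_eq e_injective hsupp]
  rw [Summable.tsum_sigma' (f := fun y => Fp (e y)) (fun n => (hasSum_fintype _).summable) hcomp]
  congr 1
  funext n
  exact Finset.tsum_subtype (n.divisorsAntidiagonal) Fp

lemma card_divisorsAntidiagonal (n : ℕ) :
    n.divisorsAntidiagonal.card = n.divisors.card := by
  rw [← Nat.image_fst_divisorsAntidiagonal]
  rw [Finset.card_image_of_injOn]
  intro x hx y hy hxy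
  simp only [Finset.mem_coe] at hx hy
  obtain ⟨hx1, hn⟩ := Nat.mem_divisorsAntidiagonal.mp hx
  obtain ⟨hy1, -⟩ := Nat.mem_divisorsAntidiagonal.mp hy
  have h1 : x.1 ≠ 0 := by rintro h; rw [h] at hx1; simp at hx1; omega
  have : x.2 = y.2 := by
    have := hx1.trans hy1.symm
    rw [hxy] at this
    exact Nat.eq_of_mul_eq_mul_left (Nat.pos_of_ne_zero (hxy ▸ h1)) this
  exact Prod.ext hxy this

lemma g_eq (n : ℕ) : g n = (μ n : ℝ) * (n.divisors.card : ℝ) / (n : ℝ) ^ 2 := by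
  rcases eq_or_ne n 0 with rfl | hn
  · simp [g]
  by_cases hsq : Squarefree n
  · unfold g
    have hco : ∀ x ∈ n.divisorsAntidiagonal, Nat.Coprime x.1 x.2 := by
      intro x hx
      obtain ⟨hmul, -⟩ := Nat.mem_divisorsAntidiagonal.mp hx
      have hg : Nat.gcd x.1 x.2 * Nat.gcd x.1 x.2 ∣ n := by
        rw [← hmul]
        exact mul_dvd_mul (Nat.gcd_dvd_left _ _) (Nat.gcd_dvd_right _ _)
      exact Nat.isUnit_iff.mp (hsq _ hg)
    have hterm : ∀ x ∈ n.divisorsAntidiagonal, Fp x = (μ n : ℝ) / (n : ℝ) ^ 2 := by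
      intro x hx
      obtain ⟨hmul, -⟩ := Nat.mem_divisorsAntidiagonal.mp hx
      unfold Fp
      rw [if_pos (hco x hx)]
      have hmu : μ x.1 * μ x.2 = μ n := by
        rw [← hmul]
        exact (isMultiplicative_moebius.map_mul_of_coprime (hco x hx)).symm
      have hc : ((x.1 : ℝ) * (x.2 : ℝ)) = (n : ℝ) := by
        rw [← hmul]; push_cast; ring
      rw [hc]
      congr 1
      push_cast [← hmu]
      ring
    rw [Finset.sum_congr rfl hterm, Finset.sum_const, nsmul_eq_mul,
      card_divisorsAntidiagonal]
    ring
  · have hmu : μ n = 0 := by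
      by_contra h
      exact hsq (moebius_ne_zero_iff_squarefree.mp h)
    rw [hmu]
    simp only [Int.cast_zero, zero_mul, zero_div]
    unfold g
    apply Finset.sum_eq_zero
    intro x hx
    obtain ⟨hmul, -⟩ := Nat.mem_divisorsAntidiagonal.mp hx
    unfold Fp
    split_ifs with h
    · have hnot : ¬ Squarefree (x.1 * x.2) := by rw [hmul]; exact hsq
      have hns : ¬ (Squarefree x.1 ∧ Squarefree x.2) := by
        intro ⟨s1, s2⟩
        exact hnot ((Nat.squarefree_mul h).mpr ⟨s1, s2⟩)
      rcases not_and_or.mp hns with hs | hs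
      · have h0 : μ x.1 = 0 := by
          by_contra hcon
          exact hs (moebius_ne_zero_iff_squarefree.mp hcon)
        rw [h0]; push_cast; ring
      · have h0 : μ x.2 = 0 := by
          by_contra hcon
          exact hs (moebius_ne_zero_iff_squarefree.mp hcon)
        rw [h0]; push_cast; ring
    · rfl

lemma g_one : g 1 = 1 := by rw [g_eq]; simp

lemma g_zero : g 0 = 0 := by rw [g_eq]; simp

lemma g_mult {m n : ℕ} (h : Nat.Coprime m n) : g (m * n) = g m * g n := by
  rcases eq_or_ne m 0 with rfl | hm
  · have : n = 1 := (Nat.coprime_zero_left n).mp h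
    subst this; simp [g_zero, g_one]
  rcases eq_or_ne n 0 with rfl | hn
  · have : m = 1 := (Nat.coprime_zero_right m).mp h
    subst this; simp [g_zero, g_one]
  rw [g_eq, g_eq, g_eq]
  rw [isMultiplicative_moebius.map_mul_of_coprime h, h.card_divisors_mul]
  have hm' : ((m:ℝ)) ≠ 0 := Nat.cast_ne_zero.mpr hm
  have hn' : ((n:ℝ)) ≠ 0 := Nat.cast_ne_zero.mpr hn
  push_cast
  field_simp

lemma summable_g_norm : Summable fun n => ‖g n‖ := by
  refine Summable.of_nonneg_of_le (fun n => norm_nonneg _) (fun n => ?_) summable_g_aux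
  unfold g
  exact norm_sum_le _ _

lemma hasProd_euler : HasProd (fun p : Nat.Primes => (1 : ℝ) - 2 / (p : ℕ) ^ 2) (∑' n, g n) := by
  have h := EulerProduct.eulerProduct_hasProd g_one (fun {m n} h => g_mult h)
    summable_g_norm g_zero
  have heq : (fun p : Nat.Primes => ∑' e : ℕ, g ((p : ℕ) ^ e)) =
      fun p : Nat.Primes => (1 : ℝ) - 2 / (p : ℕ) ^ 2 := by
    funext p
    have hp : (p : ℕ).Prime := p.2
    have hzero : ∀ e : ℕ, e ∉ ({0, 1} : Finset ℕ) → g ((p : ℕ) ^ e) = 0 := by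
      intro e he
      simp only [Finset.mem_insert, Finset.mem_singleton] at he
      push_neg at he
      rw [g_eq]
      have h0 : μ ((p:ℕ) ^ e) = 0 := by
        rw [moebius_apply_prime_pow hp he.1, if_neg he.2]
      rw [h0]
      simp
    rw [tsum_eq_sum hzero]
    have h01 : ({0, 1} : Finset ℕ) = insert 0 {1} := rfl
    rw [h01, Finset.sum_insert (by simp), Finset.sum_singleton]
    rw [pow_zero, g_one, pow_one, g_eq]
    rw [moebius_apply_prime hp, hp.divisors]
    have hp1 : (1 : ℕ) ≠ (p:ℕ) := (Nat.Prime.one_lt hp).ne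
    rw [Finset.card_insert_of_notMem (by simpa using hp1), Finset.card_singleton]
    have hpne : ((p:ℕ):ℝ) ≠ 0 := Nat.cast_ne_zero.mpr hp.pos.ne'
    push_cast
    ring
  rw [← heq]
  exact h

lemma tendsto_partial_sums :
    Tendsto (fun N : ℕ => ∑ x ∈ Finset.Icc 1 N ×ˢ Finset.Icc 1 N, Fp x) atTop
      (nhds (∑' n, g n)) := by
  rw [← tsum_Fp_eq]
  have hsum : HasSum Fp (∑' x, Fp x) := summable_Fp.hasSum
  have hmono : Monotone (fun N : ℕ => Finset.range (N + 1) ×ˢ Finset.range (N + 1)) := by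
    intro a b hab
    exact Finset.product_subset_product (Finset.range_subset_range.mpr (by omega))
      (Finset.range_subset_range.mpr (by omega))
  have hcov : ∀ x : ℕ × ℕ, ∃ N, x ∈ Finset.range (N + 1) ×ˢ Finset.range (N + 1) := by
    intro x
    exact ⟨max x.1 x.2, by
      simp only [Finset.mem_product, Finset.mem_range]
      omega⟩
  have htend := hsum.comp (Filter.tendsto_atTop_finset_of_monotone hmono hcov)
  refine htend.congr fun N => ?_
  refine (Finset.sum_subset ?_ ?_).symm
  · exact Finset.product_subset_product
      (fun x hx => Finset.mem_range.mpr (by have := Finset.mem_Icc.mp hx; omega))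
      (fun x hx => Finset.mem_range.mpr (by have := Finset.mem_Icc.mp hx; omega))
  · intro x hx hx'
    simp only [Finset.mem_product, Finset.mem_range, Finset.mem_Icc] at hx hx'
    by_contra h
    obtain ⟨h1, h2⟩ := Fp_support h
    omega

/-! ### Counting lemmas -/

lemma count_dvd_Icc (N d : ℕ) :
    ((Finset.Icc 1 N).filter (fun b => d ∣ b)).card = N / d := by
  have h : Finset.Icc 1 N = Finset.Ioc 0 N := Finset.Icc_add_one_left_eq_Ioc 0 N
  rw [h]
  exact Nat.Ioc_filter_dvd_card_eq_div N d

lemma count_mod_le (N D r : ℕ) :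
    ((Finset.Icc 1 N).filter (fun a => a % D = r)).card ≤ N / D + 1 := by
  have h : ((Finset.Icc 1 N).filter (fun a => a % D = r)).card
      ≤ (Finset.range (N / D + 1)).card := by
    apply Finset.card_le_card_of_injOn (fun a => a / D)
    · intro a ha
      simp only [Finset.mem_coe, Finset.mem_filter, Finset.mem_Icc] at ha
      exact Finset.mem_range.mpr (Nat.lt_succ_of_le (Nat.div_le_div_right ha.1.2))
    · intro a ha b hb hab
      simp only [Finset.coe_filter, Set.mem_setOf_eq, Finset.mem_Icc] at ha hb
      have h1 := Nat.div_add_mod a D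
      have h2 := Nat.div_add_mod b D
      simp only at hab
      rw [← h1, ← h2, hab, ha.2, hb.2]
  simpa using h

lemma le_count_mod (N D r : ℕ) (hD : 0 < D) (hr : r < D) :
    N / D ≤ ((Finset.Icc 1 N).filter (fun a => a % D = r)).card := by
  have h : (Finset.range (N / D)).card
      ≤ ((Finset.Icc 1 N).filter (fun a => a % D = r)).card := by
    apply Finset.card_le_card_of_injOn (fun k => if r = 0 then D * (k + 1) else D * k + r)
    · intro k hk
      have hk' : k < N / D := Finset.mem_range.mp hk
      have hmul : D * (k + 1) ≤ D * (N / D) := Nat.mul_le_mul_left D (by omega)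
      have hDN : D * (N / D) ≤ N := by
        rw [mul_comm]; exact Nat.div_mul_le_self N D
      simp only [Finset.mem_coe, Finset.mem_filter, Finset.mem_Icc]
      split_ifs with h0
      · subst h0
        refine ⟨⟨Nat.mul_pos hD (Nat.succ_pos k), by omega⟩, Nat.mul_mod_right D (k+1)⟩
      · have hexp : D * (k + 1) = D * k + D := by ring
        refine ⟨⟨by omega, by omega⟩, ?_⟩
        rw [Nat.mul_add_mod]
        exact Nat.mod_eq_of_lt hr
    · intro a _ b _ hab
      simp only at hab
      split_ifs at hab with h0
      · have := Nat.eq_of_mul_eq_mul_left hD hab; omega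
      · have : D * a = D * b := by omega
        exact Nat.eq_of_mul_eq_mul_left hD this
  simpa using h

lemma coprime_of_consecutive {d₁ d₂ a : ℕ} (h1 : d₁ ∣ a) (h2 : d₂ ∣ (a + 1)) :
    Nat.Coprime d₁ d₂ := by
  have hg1 : Nat.gcd d₁ d₂ ∣ a := dvd_trans (Nat.gcd_dvd_left _ _) h1
  have hg2 : Nat.gcd d₁ d₂ ∣ a + 1 := dvd_trans (Nat.gcd_dvd_right _ _) h2
  have hone : Nat.gcd d₁ d₂ ∣ 1 := by
    have := Nat.dvd_sub hg2 hg1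
    simpa using this
  exact Nat.dvd_one.mp hone

lemma crt_char (d₁ d₂ : ℕ) (h₁ : 0 < d₁) (h₂ : 0 < d₂) (hco : Nat.Coprime d₁ d₂) :
    ∃ r, r < d₁ * d₂ ∧ ∀ a : ℕ, (d₁ ∣ a ∧ d₂ ∣ (a + 1)) ↔ a % (d₁ * d₂) = r := by
  obtain ⟨k, hk1, hk2⟩ := Nat.chineseRemainder hco 0 (d₂ - 1)
  refine ⟨k % (d₁ * d₂), Nat.mod_lt _ (Nat.mul_pos h₁ h₂), fun a => ?_⟩
  have hmod : (a % (d₁ * d₂) = k % (d₁ * d₂)) ↔ a ≡ k [MOD d₁ * d₂] := Iff.rfl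
  rw [hmod, ← Nat.modEq_and_modEq_iff_modEq_mul hco]
  have e2 : (d₂ - 1) + 1 = d₂ := by omega
  constructor
  · rintro ⟨ha1, ha2⟩
    constructor
    · exact (Nat.modEq_zero_iff_dvd.mpr ha1).trans hk1.symm
    · have hstep : a + 1 ≡ (d₂ - 1) + 1 [MOD d₂] := by
        rw [e2]
        exact (Nat.modEq_zero_iff_dvd.mpr ha2).trans (Nat.modEq_zero_iff_dvd.mpr dvd_rfl).symm
      exact (Nat.ModEq.add_right_cancel' 1 hstep).trans hk2.symm
  · rintro ⟨ha1, ha2⟩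
    constructor
    · exact Nat.modEq_zero_iff_dvd.mp (ha1.trans hk1)
    · have : a ≡ d₂ - 1 [MOD d₂] := ha2.trans hk2
      have hstep : a + 1 ≡ (d₂ - 1) + 1 [MOD d₂] := this.add_right 1
      rw [e2] at hstep
      exact Nat.modEq_zero_iff_dvd.mp (hstep.trans (Nat.modEq_zero_iff_dvd.mpr dvd_rfl))

/-! ### The Möbius-indicator identity -/

lemma moebius_indicator (N m b : ℕ) (hb1 : 1 ≤ b) (hbN : b ≤ N) :
    ∑ d ∈ Finset.Icc 1 N, (if d ∣ m ∧ d ∣ b then (μ d : ℝ) else 0)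
      = if Nat.Coprime m b then 1 else 0 := by
  rw [← Finset.sum_filter]
  have hgne : Nat.gcd m b ≠ 0 := by
    intro h
    rw [Nat.gcd_eq_zero_iff] at h
    omega
  have hfil : (Finset.Icc 1 N).filter (fun d => d ∣ m ∧ d ∣ b) = (Nat.gcd m b).divisors := by
    ext d
    simp only [Finset.mem_filter, Finset.mem_Icc, Nat.mem_divisors]
    constructor
    · rintro ⟨⟨hd1, hdN⟩, hdm, hdb⟩
      exact ⟨Nat.dvd_gcd hdm hdb, hgne⟩
    · rintro ⟨hd, -⟩
      have hdm : d ∣ m := hd.trans (Nat.gcd_dvd_left _ _)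
      have hdb : d ∣ b := hd.trans (Nat.gcd_dvd_right _ _)
      have hd0 : d ≠ 0 := by
        rintro rfl
        exact hgne (Nat.eq_zero_of_zero_dvd hd)
      have hdleb : d ≤ b := Nat.le_of_dvd (by omega) hdb
      exact ⟨⟨by omega, by omega⟩, hdm, hdb⟩
  rw [hfil]
  have hZ : ∑ d ∈ (Nat.gcd m b).divisors, μ d = if Nat.gcd m b = 1 then 1 else 0 := by
    have h : (μ * ↑ζ : ArithmeticFunction ℤ) (Nat.gcd m b)
        = (1 : ArithmeticFunction ℤ) (Nat.gcd m b) := by rw [moebius_mul_coe_zeta]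
    rw [coe_mul_zeta_apply] at h
    rw [one_apply] at h
    exact h
  have hcast : ∑ d ∈ (Nat.gcd m b).divisors, (μ d : ℝ)
      = ((∑ d ∈ (Nat.gcd m b).divisors, μ d : ℤ) : ℝ) := by push_cast; rfl
  rw [hcast, hZ]
  unfold Nat.Coprime
  split_ifs <;> simp

lemma ite_mul_ite (P Q : Prop) [Decidable P] [Decidable Q] (x y : ℝ) :
    (if P then x else 0) * (if Q then y else 0) = if P ∧ Q then x * y else 0 := by
  split_ifs <;> simp_all

/-! ### The main finite identity -/

lemma card_identity (N : ℕ) :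
    ((((Finset.Icc 1 N) ×ˢ (Finset.Icc 1 N)).filter
        (fun ab : ℕ × ℕ => Nat.gcd (ab.1 ^ 2 + ab.1) ab.2 = 1)).card : ℝ)
      = ∑ d ∈ Finset.Icc 1 N ×ˢ Finset.Icc 1 N,
          ((μ d.1 : ℝ) * (μ d.2 : ℝ)) *
          ((((Finset.Icc 1 N).filter (fun a => d.1 ∣ a ∧ d.2 ∣ (a + 1))).card : ℝ) *
           (((Finset.Icc 1 N).filter (fun b => d.1 ∣ b ∧ d.2 ∣ b)).card : ℝ)) := by
  classical
  -- Step A : card as a sum of indicators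
  have stepA : ((((Finset.Icc 1 N) ×ˢ (Finset.Icc 1 N)).filter
        (fun ab : ℕ × ℕ => Nat.gcd (ab.1 ^ 2 + ab.1) ab.2 = 1)).card : ℝ)
      = ∑ ab ∈ (Finset.Icc 1 N) ×ˢ (Finset.Icc 1 N),
          (if Nat.gcd (ab.1 ^ 2 + ab.1) ab.2 = 1 then (1:ℝ) else 0) := by
    rw [Finset.card_filter]
    push_cast
    rfl
  rw [stepA]
  -- Step B : replace the indicator by a product of two Möbius sums
  have stepB : ∀ ab ∈ (Finset.Icc 1 N) ×ˢ (Finset.Icc 1 N),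
      (if Nat.gcd (ab.1 ^ 2 + ab.1) ab.2 = 1 then (1:ℝ) else 0)
        = ∑ d ∈ Finset.Icc 1 N ×ˢ Finset.Icc 1 N,
            ((if d.1 ∣ ab.1 ∧ d.1 ∣ ab.2 then (μ d.1 : ℝ) else 0) *
             (if d.2 ∣ (ab.1 + 1) ∧ d.2 ∣ ab.2 then (μ d.2 : ℝ) else 0)) := by
    intro ab hab
    obtain ⟨ha, hb⟩ := Finset.mem_product.mp hab
    rw [Finset.mem_Icc] at ha hb
    have hsplit : (Nat.gcd (ab.1 ^ 2 + ab.1) ab.2 = 1)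
        ↔ (Nat.Coprime ab.1 ab.2 ∧ Nat.Coprime (ab.1 + 1) ab.2) := by
      have hfac : ab.1 ^ 2 + ab.1 = ab.1 * (ab.1 + 1) := by ring
      rw [hfac]
      exact Nat.coprime_mul_iff_left
    have hrw : (if Nat.gcd (ab.1 ^ 2 + ab.1) ab.2 = 1 then (1:ℝ) else 0)
        = (if Nat.Coprime ab.1 ab.2 then (1:ℝ) else 0) *
          (if Nat.Coprime (ab.1 + 1) ab.2 then (1:ℝ) else 0) := by
      rw [ite_mul_ite]
      by_cases hc : Nat.gcd (ab.1 ^ 2 + ab.1) ab.2 = 1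
      · obtain ⟨c1, c2⟩ := hsplit.mp hc
        rw [if_pos hc, if_pos ⟨c1, c2⟩]
        norm_num
      · have hcc : ¬ (Nat.Coprime ab.1 ab.2 ∧ Nat.Coprime (ab.1 + 1) ab.2) :=
          fun h => hc (hsplit.mpr h)
        rw [if_neg hc, if_neg hcc]
    rw [hrw, ← moebius_indicator N ab.1 ab.2 hb.1 hb.2,
      ← moebius_indicator N (ab.1 + 1) ab.2 hb.1 hb.2]
    rw [Finset.sum_mul_sum]
    rw [Finset.sum_product]
  rw [Finset.sum_congr rfl stepB]
  -- Step C : swap the two sums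
  rw [Finset.sum_comm]
  -- Step D : compute the inner sums
  apply Finset.sum_congr rfl
  intro d hd
  have inner : ∀ ab ∈ (Finset.Icc 1 N) ×ˢ (Finset.Icc 1 N),
      ((if d.1 ∣ ab.1 ∧ d.1 ∣ ab.2 then (μ d.1 : ℝ) else 0) *
       (if d.2 ∣ (ab.1 + 1) ∧ d.2 ∣ ab.2 then (μ d.2 : ℝ) else 0))
      = (if (d.1 ∣ ab.1 ∧ d.2 ∣ (ab.1 + 1)) ∧ (d.1 ∣ ab.2 ∧ d.2 ∣ ab.2)
          then (μ d.1 : ℝ) * (μ d.2 : ℝ) else 0) := by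
    intro ab _
    rw [ite_mul_ite]
    congr 1
    · exact propext (by tauto)
  rw [Finset.sum_congr rfl inner, ← Finset.sum_filter]
  have hfp : ((Finset.Icc 1 N) ×ˢ (Finset.Icc 1 N)).filter
        (fun ab : ℕ × ℕ => (d.1 ∣ ab.1 ∧ d.2 ∣ (ab.1 + 1)) ∧ (d.1 ∣ ab.2 ∧ d.2 ∣ ab.2))
      = ((Finset.Icc 1 N).filter (fun a => d.1 ∣ a ∧ d.2 ∣ (a + 1))) ×ˢ
        ((Finset.Icc 1 N).filter (fun b => d.1 ∣ b ∧ d.2 ∣ b)) := by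
    ext ab
    simp only [Finset.mem_filter, Finset.mem_product]
    tauto
  rw [hfp, Finset.sum_const, Finset.card_product, nsmul_eq_mul]
  push_cast
  ring

/-! ### Per-pair estimate -/

lemma pair_est (N d₁ d₂ : ℕ) (h₁ : 1 ≤ d₁) (h₂ : 1 ≤ d₂) :
    |((μ d₁ : ℝ) * (μ d₂ : ℝ)) *
        ((((Finset.Icc 1 N).filter (fun a => d₁ ∣ a ∧ d₂ ∣ (a + 1))).card : ℝ) *
         (((Finset.Icc 1 N).filter (fun b => d₁ ∣ b ∧ d₂ ∣ b)).card : ℝ))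
      - (N : ℝ) ^ 2 * Fp (d₁, d₂)|
      ≤ 3 * ((N : ℝ) / ((d₁ : ℝ) * (d₂ : ℝ))) := by
  have hd1R : (0:ℝ) < (d₁:ℝ) := by exact_mod_cast h₁
  have hd2R : (0:ℝ) < (d₂:ℝ) := by exact_mod_cast h₂
  have hrhs_nonneg : 0 ≤ 3 * ((N : ℝ) / ((d₁ : ℝ) * (d₂ : ℝ))) := by positivity
  by_cases hco : Nat.Coprime d₁ d₂
  · -- coprime case
    set D := d₁ * d₂ with hD
    have hDpos : 0 < D := Nat.mul_pos h₁ h₂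
    -- Kb
    have hKb : ((Finset.Icc 1 N).filter (fun b => d₁ ∣ b ∧ d₂ ∣ b)).card = N / D := by
      have : (Finset.Icc 1 N).filter (fun b => d₁ ∣ b ∧ d₂ ∣ b)
          = (Finset.Icc 1 N).filter (fun b => D ∣ b) := by
        apply Finset.filter_congr
        intro b _
        constructor
        · rintro ⟨hb1, hb2⟩; exact hco.mul_dvd_of_dvd_of_dvd hb1 hb2
        · intro hb
          exact ⟨(dvd_mul_right d₁ d₂).trans hb, (dvd_mul_left d₂ d₁).trans hb⟩
      rw [this, count_dvd_Icc]
    -- Ka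
    obtain ⟨r, hrD, hcrt⟩ := crt_char d₁ d₂ h₁ h₂ hco
    have hKa_eq : (Finset.Icc 1 N).filter (fun a => d₁ ∣ a ∧ d₂ ∣ (a + 1))
        = (Finset.Icc 1 N).filter (fun a => a % D = r) := by
      apply Finset.filter_congr
      intro a _
      exact hcrt a
    have hKa_le : ((Finset.Icc 1 N).filter (fun a => d₁ ∣ a ∧ d₂ ∣ (a + 1))).card
        ≤ N / D + 1 := by rw [hKa_eq]; exact count_mod_le N D r
    have hKa_ge : N / D ≤ ((Finset.Icc 1 N).filter (fun a => d₁ ∣ a ∧ d₂ ∣ (a + 1))).card := by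
      rw [hKa_eq]; exact le_count_mod N D r hDpos hrD
    -- real numbers
    set ka : ℝ := (((Finset.Icc 1 N).filter (fun a => d₁ ∣ a ∧ d₂ ∣ (a + 1))).card : ℝ)
    set x : ℝ := (N : ℝ) / ((d₁ : ℝ) * (d₂ : ℝ)) with hxdef
    have hDcast : ((D : ℕ) : ℝ) = (d₁ : ℝ) * (d₂ : ℝ) := Nat.cast_mul d₁ d₂
    have hDR : (0:ℝ) < (D:ℝ) := by exact_mod_cast hDpos
    set fl : ℝ := ((N / D : ℕ) : ℝ) with hfl
    have hfl_le : fl ≤ x := by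
      rw [hxdef, ← hDcast]
      exact Nat.cast_div_le
    have hx_lt : x < fl + 1 := by
      rw [hxdef, ← hDcast, div_lt_iff₀ hDR]
      have h := Nat.div_add_mod N D
      have h2 : N % D < D := Nat.mod_lt _ hDpos
      have : (N:ℝ) < (D:ℝ) * ((N / D : ℕ) : ℝ) + (D:ℝ) := by
        have : N < D * (N / D) + D := by omega
        exact_mod_cast this
      rw [hfl]
      linarith
    have hka_ge : fl ≤ ka := Nat.cast_le.mpr hKa_ge
    have hka_le : ka ≤ fl + 1 := by
      have h := (Nat.cast_le (α := ℝ)).mpr hKa_le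
      push_cast at h
      exact h
    have hkb_eq : (((Finset.Icc 1 N).filter (fun b => d₁ ∣ b ∧ d₂ ∣ b)).card : ℝ) = fl :=
      congrArg _ hKb
    set kb : ℝ := (((Finset.Icc 1 N).filter (fun b => d₁ ∣ b ∧ d₂ ∣ b)).card : ℝ)
    have hFp : Fp (d₁, d₂) = ((μ d₁ : ℝ) * (μ d₂ : ℝ)) / ((d₁ : ℝ) * (d₂ : ℝ)) ^ 2 := by
      unfold Fp
      rw [if_pos hco]
    have hN2Fp : (N : ℝ) ^ 2 * Fp (d₁, d₂) = ((μ d₁ : ℝ) * (μ d₂ : ℝ)) * x ^ 2 := by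
      rw [hFp, hxdef]
      field_simp
    have hxnn : 0 ≤ x := by positivity
    have h1 : |ka - x| ≤ 1 := abs_le.mpr ⟨by linarith, by linarith⟩
    have h2 : |kb - x| ≤ 1 := abs_le.mpr ⟨by rw [hkb_eq]; linarith, by rw [hkb_eq]; linarith⟩
    have hkb_le : kb ≤ x := by rw [hkb_eq]; linarith
    have hkb_nn : 0 ≤ kb := by positivity
    have key : |ka * kb - x ^ 2| ≤ 2 * x := by
      have hsplit : ka * kb - x ^ 2 = (ka - x) * kb + x * (kb - x) := by ring
      rw [hsplit]
      calc |(ka - x) * kb + x * (kb - x)| ≤ |(ka - x) * kb| + |x * (kb - x)| := abs_add_le _ _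
        _ = |ka - x| * |kb| + |x| * |kb - x| := by rw [abs_mul, abs_mul]
        _ ≤ 1 * kb + x * 1 := by
            have e1 : |kb| = kb := abs_of_nonneg hkb_nn
            have e2 : |x| = x := abs_of_nonneg hxnn
            rw [e1, e2]
            gcongr
        _ ≤ 2 * x := by linarith
    have hmu : |(μ d₁ : ℝ) * (μ d₂ : ℝ)| ≤ 1 := by
      rw [abs_mul]
      calc |(μ d₁ : ℝ)| * |(μ d₂ : ℝ)| ≤ 1 * 1 :=
        mul_le_mul (abs_mu_le _) (abs_mu_le _) (abs_nonneg _) zero_le_one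
        _ = 1 := one_mul 1
    rw [hN2Fp]
    calc |((μ d₁ : ℝ) * (μ d₂ : ℝ)) * (ka * kb) - ((μ d₁ : ℝ) * (μ d₂ : ℝ)) * x ^ 2|
        = |(μ d₁ : ℝ) * (μ d₂ : ℝ)| * |ka * kb - x ^ 2| := by
          rw [← abs_mul]; congr 1; ring
      _ ≤ 1 * (2 * x) := by
          apply mul_le_mul hmu key (abs_nonneg _) zero_le_one
      _ ≤ 3 * x := by linarith
  · -- not coprime : both sides vanish
    have hKa : (Finset.Icc 1 N).filter (fun a => d₁ ∣ a ∧ d₂ ∣ (a + 1)) = ∅ := by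
      apply Finset.filter_eq_empty_iff.mpr
      intro a _
      rintro ⟨hda, hda1⟩
      exact hco (coprime_of_consecutive hda hda1)
    have hFp : Fp (d₁, d₂) = 0 := by
      unfold Fp
      rw [if_neg hco]
    rw [hKa, hFp]
    simp only [Finset.card_empty, Nat.cast_zero, zero_mul, mul_zero, sub_zero, abs_zero]
    exact hrhs_nonneg

/-! ### Harmonic sum bound -/

lemma harmonic_sum_bound (N : ℕ) :
    ∑ d ∈ Finset.Icc 1 N, (1 / (d:ℝ)) ≤ 1 + Real.log N := by
  have hH : ∑ d ∈ Finset.Icc 1 N, (1 / (d:ℝ)) = ((harmonic N : ℚ) : ℝ) := by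
    rw [harmonic_eq_sum_Icc]
    push_cast
    simp [one_div]
  rw [hH]
  exact harmonic_le_one_add_log N

lemma harmonic_sum_nonneg (N : ℕ) : 0 ≤ ∑ d ∈ Finset.Icc 1 N, (1 / (d:ℝ)) := by
  apply Finset.sum_nonneg
  intro d _
  positivity

/-! ### Total bound -/

lemma total_bound (N : ℕ) (hN : 1 ≤ N) :
    |((((Finset.Icc 1 N) ×ˢ (Finset.Icc 1 N)).filter
        (fun ab : ℕ × ℕ => Nat.gcd (ab.1 ^ 2 + ab.1) ab.2 = 1)).card : ℝ) / (N : ℝ) ^ 2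
      - ∑ d ∈ Finset.Icc 1 N ×ˢ Finset.Icc 1 N, Fp d|
      ≤ 3 * (1 + Real.log N) ^ 2 / N := by
  have hNR : (0:ℝ) < (N:ℝ) := by exact_mod_cast hN
  set S := Finset.Icc 1 N ×ˢ Finset.Icc 1 N with hS
  set C : ℝ := ((((Finset.Icc 1 N) ×ˢ (Finset.Icc 1 N)).filter
        (fun ab : ℕ × ℕ => Nat.gcd (ab.1 ^ 2 + ab.1) ab.2 = 1)).card : ℝ)
  have hCid : C = ∑ d ∈ S, ((μ d.1 : ℝ) * (μ d.2 : ℝ)) *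
          ((((Finset.Icc 1 N).filter (fun a => d.1 ∣ a ∧ d.2 ∣ (a + 1))).card : ℝ) *
           (((Finset.Icc 1 N).filter (fun b => d.1 ∣ b ∧ d.2 ∣ b)).card : ℝ)) := card_identity N
  have hmain : C / (N:ℝ)^2 - ∑ d ∈ S, Fp d
      = (∑ d ∈ S, (((μ d.1 : ℝ) * (μ d.2 : ℝ)) *
          ((((Finset.Icc 1 N).filter (fun a => d.1 ∣ a ∧ d.2 ∣ (a + 1))).card : ℝ) *
           (((Finset.Icc 1 N).filter (fun b => d.1 ∣ b ∧ d.2 ∣ b)).card : ℝ))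
          - (N:ℝ)^2 * Fp d)) / (N:ℝ)^2 := by
    rw [Finset.sum_sub_distrib, ← hCid]
    rw [sub_div]
    congr 1
    rw [Finset.sum_div]
    apply Finset.sum_congr rfl
    intro d _
    field_simp
  rw [hmain, abs_div, abs_of_nonneg (by positivity : (0:ℝ) ≤ (N:ℝ)^2)]
  have habs : |∑ d ∈ S, (((μ d.1 : ℝ) * (μ d.2 : ℝ)) *
          ((((Finset.Icc 1 N).filter (fun a => d.1 ∣ a ∧ d.2 ∣ (a + 1))).card : ℝ) *
           (((Finset.Icc 1 N).filter (fun b => d.1 ∣ b ∧ d.2 ∣ b)).card : ℝ))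
          - (N:ℝ)^2 * Fp d)|
      ≤ ∑ d ∈ S, |(((μ d.1 : ℝ) * (μ d.2 : ℝ)) *
          ((((Finset.Icc 1 N).filter (fun a => d.1 ∣ a ∧ d.2 ∣ (a + 1))).card : ℝ) *
           (((Finset.Icc 1 N).filter (fun b => d.1 ∣ b ∧ d.2 ∣ b)).card : ℝ))
          - (N:ℝ)^2 * Fp d)| := Finset.abs_sum_le_sum_abs _ _
  have hterm : ∑ d ∈ S, |(((μ d.1 : ℝ) * (μ d.2 : ℝ)) *
          ((((Finset.Icc 1 N).filter (fun a => d.1 ∣ a ∧ d.2 ∣ (a + 1))).card : ℝ) *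
           (((Finset.Icc 1 N).filter (fun b => d.1 ∣ b ∧ d.2 ∣ b)).card : ℝ))
          - (N:ℝ)^2 * Fp d)|
      ≤ ∑ d ∈ S, 3 * ((N:ℝ) / ((d.1 : ℝ) * (d.2 : ℝ))) := by
    apply Finset.sum_le_sum
    intro d hd
    obtain ⟨hd1, hd2⟩ := Finset.mem_product.mp hd
    rw [Finset.mem_Icc] at hd1 hd2
    have h := pair_est N d.1 d.2 hd1.1 hd2.1
    convert h using 3
  have hsplit : ∑ d ∈ S, 3 * ((N:ℝ) / ((d.1 : ℝ) * (d.2 : ℝ)))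
      = 3 * (N:ℝ) * ((∑ d ∈ Finset.Icc 1 N, (1/(d:ℝ))) * (∑ d ∈ Finset.Icc 1 N, (1/(d:ℝ)))) := by
    have hHH : (∑ d ∈ Finset.Icc 1 N, (1/(d:ℝ))) * (∑ d ∈ Finset.Icc 1 N, (1/(d:ℝ)))
        = ∑ d ∈ S, (1/(d.1:ℝ)) * (1/(d.2:ℝ)) := by
      rw [Finset.sum_mul_sum, hS, Finset.sum_product]
    rw [hHH, Finset.mul_sum]
    apply Finset.sum_congr rfl
    intro d _
    rw [div_eq_mul_inv, mul_inv]
    ring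
  have hHb : (∑ d ∈ Finset.Icc 1 N, (1/(d:ℝ))) * (∑ d ∈ Finset.Icc 1 N, (1/(d:ℝ)))
      ≤ (1 + Real.log N) * (1 + Real.log N) := by
    have hH := harmonic_sum_bound N
    have hHnn := harmonic_sum_nonneg N
    gcongr
  have hfinal : |∑ d ∈ S, (((μ d.1 : ℝ) * (μ d.2 : ℝ)) *
          ((((Finset.Icc 1 N).filter (fun a => d.1 ∣ a ∧ d.2 ∣ (a + 1))).card : ℝ) *
           (((Finset.Icc 1 N).filter (fun b => d.1 ∣ b ∧ d.2 ∣ b)).card : ℝ))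
          - (N:ℝ)^2 * Fp d)|
      ≤ 3 * (N:ℝ) * ((1 + Real.log N) * (1 + Real.log N)) := by
    have hNnn : (0:ℝ) ≤ 3 * (N:ℝ) := by positivity
    calc |∑ d ∈ S, (((μ d.1 : ℝ) * (μ d.2 : ℝ)) *
          ((((Finset.Icc 1 N).filter (fun a => d.1 ∣ a ∧ d.2 ∣ (a + 1))).card : ℝ) *
           (((Finset.Icc 1 N).filter (fun b => d.1 ∣ b ∧ d.2 ∣ b)).card : ℝ))
          - (N:ℝ)^2 * Fp d)|
        ≤ ∑ d ∈ S, 3 * ((N:ℝ) / ((d.1 : ℝ) * (d.2 : ℝ))) := le_trans habs hterm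
      _ = 3 * (N:ℝ) * ((∑ d ∈ Finset.Icc 1 N, (1/(d:ℝ))) * (∑ d ∈ Finset.Icc 1 N, (1/(d:ℝ)))) :=
          hsplit
      _ ≤ 3 * (N:ℝ) * ((1 + Real.log N) * (1 + Real.log N)) := by
          exact mul_le_mul_of_nonneg_left hHb hNnn
  have hdivle : |∑ d ∈ S, (((μ d.1 : ℝ) * (μ d.2 : ℝ)) *
          ((((Finset.Icc 1 N).filter (fun a => d.1 ∣ a ∧ d.2 ∣ (a + 1))).card : ℝ) *
           (((Finset.Icc 1 N).filter (fun b => d.1 ∣ b ∧ d.2 ∣ b)).card : ℝ))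
          - (N:ℝ)^2 * Fp d)| / (N:ℝ)^2
      ≤ (3 * (N:ℝ) * ((1 + Real.log N) * (1 + Real.log N))) / (N:ℝ)^2 := by
    gcongr
  refine le_trans hdivle ?_
  rw [div_le_div_iff₀ (by positivity) (by positivity)]
  ring_nf
  nlinarith [hNR, sq_nonneg (1 + Real.log N)]

/-! ### The error bound tends to zero -/

lemma bound_tendsto :
    Tendsto (fun N : ℕ => 3 * (1 + Real.log N) ^ 2 / N) atTop (nhds 0) := by
  have hcast : Tendsto (fun N : ℕ => (N : ℝ)) atTop atTop := tendsto_natCast_atTop_atTop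
  have t0 : Tendsto (fun x : ℝ => Real.log x ^ 0 / (1 * x + 0)) atTop (nhds 0) :=
    Real.tendsto_pow_log_div_mul_add_atTop 1 0 0 one_ne_zero
  have t1 : Tendsto (fun x : ℝ => Real.log x ^ 1 / (1 * x + 0)) atTop (nhds 0) :=
    Real.tendsto_pow_log_div_mul_add_atTop 1 0 1 one_ne_zero
  have t2 : Tendsto (fun x : ℝ => Real.log x ^ 2 / (1 * x + 0)) atTop (nhds 0) :=
    Real.tendsto_pow_log_div_mul_add_atTop 1 0 2 one_ne_zero
  have c0 := (t0.comp hcast).const_mul (3:ℝ)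
  have c1 := (t1.comp hcast).const_mul (6:ℝ)
  have c2 := (t2.comp hcast).const_mul (3:ℝ)
  have hsum := (c0.add c1).add c2
  simp only [mul_zero, add_zero] at hsum
  refine hsum.congr fun N => ?_
  simp only [Function.comp_apply, pow_zero, pow_one, one_mul, add_zero]
  ring

/-! ### The convergence of the density -/

lemma density_tendsto :
    Tendsto (fun N : ℕ =>
        ((((Finset.Icc 1 N) ×ˢ (Finset.Icc 1 N)).filter
            (fun ab : ℕ × ℕ => Nat.gcd (ab.1 ^ 2 + ab.1) ab.2 = 1)).card : ℝ) /
          (N : ℝ) ^ 2)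
      atTop (nhds (∑' n, g n)) := by
  set u : ℕ → ℝ := fun N =>
    ((((Finset.Icc 1 N) ×ˢ (Finset.Icc 1 N)).filter
        (fun ab : ℕ × ℕ => Nat.gcd (ab.1 ^ 2 + ab.1) ab.2 = 1)).card : ℝ) / (N : ℝ) ^ 2
  set v : ℕ → ℝ := fun N => ∑ d ∈ Finset.Icc 1 N ×ˢ Finset.Icc 1 N, Fp d
  have hv : Tendsto v atTop (nhds (∑' n, g n)) := tendsto_partial_sums
  have hdiff : Tendsto (fun N => u N - v N) atTop (nhds 0) := by
    apply squeeze_zero_norm' (a := fun N : ℕ => 3 * (1 + Real.log N) ^ 2 / N)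
    · filter_upwards [Filter.eventually_ge_atTop 1] with N hN
      rw [Real.norm_eq_abs]
      exact total_bound N hN
    · exact bound_tendsto
  have := hv.add hdiff
  rw [add_zero] at this
  refine this.congr fun N => ?_
  ring

/-! ### Visibility of coprime points -/

lemma visible_of_coprime {a b : ℕ} (ha : 1 ≤ a) (hb : 1 ≤ b)
    (h : Nat.gcd (a ^ 2 + a) b = 1) : FVisible11 a b := by
  have haQ : (0:ℚ) < (a:ℚ) := by exact_mod_cast ha
  have hden : (0:ℚ) < (a:ℚ) ^ 2 + a := by positivity
  refine ⟨ha, hb, (b : ℚ) / ((a:ℚ) ^ 2 + a), ?_, ?_, ?_⟩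
  · apply div_pos _ hden
    exact_mod_cast hb
  · field_simp
  · intro a' b' ha' haa' hb' heq
    have hkey : (b' : ℚ) * ((a:ℚ) ^ 2 + a) = (b:ℚ) * ((a':ℚ) ^ 2 + a') := by
      rw [heq]
      field_simp
    have hnat : b' * (a ^ 2 + a) = b * (a' ^ 2 + a') := by exact_mod_cast hkey
    have hdvd : (a ^ 2 + a) ∣ b * (a' ^ 2 + a') := ⟨b', by rw [← hnat]; ring⟩
    have hco : Nat.Coprime (a ^ 2 + a) b := h
    have hdvd2 : (a ^ 2 + a) ∣ (a' ^ 2 + a') := hco.dvd_of_dvd_mul_left hdvd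
    have hsq : a' ^ 2 < a ^ 2 := Nat.pow_lt_pow_left haa' (by norm_num)
    have hpos : 0 < a' ^ 2 + a' := by positivity
    have := Nat.le_of_dvd hpos hdvd2
    omega

end Stmt3Aux

theorem stmt_3 :
    ∃ L : ℝ,
      HasProd (fun p : Nat.Primes => (1 : ℝ) - 2 / (p : ℕ) ^ 2) L ∧
      Filter.Tendsto
        (fun N : ℕ =>
          ((((Finset.Icc 1 N) ×ˢ (Finset.Icc 1 N)).filter
              (fun ab : ℕ × ℕ => Nat.gcd (ab.1 ^ 2 + ab.1) ab.2 = 1)).card : ℝ) /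
            (N : ℝ) ^ 2)
        Filter.atTop (nhds L) ∧
      L ≤ Filter.atTop.liminf
        (fun N : ℕ =>
          (({ab : ℕ × ℕ | FVisible11 ab.1 ab.2 ∧ ab.1 ≤ N ∧ ab.2 ≤ N}.ncard : ℝ)) /
            (N : ℝ) ^ 2) := by
  classical
  refine ⟨∑' n, Stmt3Aux.g n, Stmt3Aux.hasProd_euler, Stmt3Aux.density_tendsto, ?_⟩
  set u : ℕ → ℝ := fun N =>
    ((((Finset.Icc 1 N) ×ˢ (Finset.Icc 1 N)).filter
        (fun ab : ℕ × ℕ => Nat.gcd (ab.1 ^ 2 + ab.1) ab.2 = 1)).card : ℝ) / (N : ℝ) ^ 2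
  set v : ℕ → ℝ := fun N =>
    (({ab : ℕ × ℕ | FVisible11 ab.1 ab.2 ∧ ab.1 ≤ N ∧ ab.2 ≤ N}.ncard : ℝ)) / (N : ℝ) ^ 2
  have hu : Filter.Tendsto u Filter.atTop (nhds (∑' n, Stmt3Aux.g n)) := Stmt3Aux.density_tendsto
  -- finiteness of the visible sets
  have hVsub : ∀ N : ℕ, {ab : ℕ × ℕ | FVisible11 ab.1 ab.2 ∧ ab.1 ≤ N ∧ ab.2 ≤ N}
      ⊆ ↑(Finset.Icc 1 N ×ˢ Finset.Icc 1 N) := by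
    intro N ab hab
    obtain ⟨⟨h1, h2, -⟩, h3, h4⟩ := hab
    simp only [Finset.coe_product, Set.mem_prod, Finset.mem_coe, Finset.mem_Icc]
    exact ⟨⟨h1, h3⟩, ⟨h2, h4⟩⟩
  have hVfin : ∀ N : ℕ, {ab : ℕ × ℕ | FVisible11 ab.1 ab.2 ∧ ab.1 ≤ N ∧ ab.2 ≤ N}.Finite :=
    fun N => Set.Finite.subset (Finset.Icc 1 N ×ˢ Finset.Icc 1 N).finite_toSet (hVsub N)
  -- u ≤ v pointwise
  have hle : ∀ N, u N ≤ v N := by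
    intro N
    rcases Nat.eq_zero_or_pos N with rfl | hN
    · simp [u, v]
    have hsub : ↑(((Finset.Icc 1 N) ×ˢ (Finset.Icc 1 N)).filter
        (fun ab : ℕ × ℕ => Nat.gcd (ab.1 ^ 2 + ab.1) ab.2 = 1))
        ⊆ {ab : ℕ × ℕ | FVisible11 ab.1 ab.2 ∧ ab.1 ≤ N ∧ ab.2 ≤ N} := by
      intro ab hab
      simp only [Finset.coe_filter, Set.mem_setOf_eq, Finset.mem_product, Finset.mem_Icc] at hab
      obtain ⟨⟨⟨ha1, ha2⟩, ⟨hb1, hb2⟩⟩, hgcd⟩ := hab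
      exact ⟨Stmt3Aux.visible_of_coprime ha1 hb1 hgcd, ha2, hb2⟩
    have hcard : ((((Finset.Icc 1 N) ×ˢ (Finset.Icc 1 N)).filter
        (fun ab : ℕ × ℕ => Nat.gcd (ab.1 ^ 2 + ab.1) ab.2 = 1)).card : ℝ)
        ≤ ({ab : ℕ × ℕ | FVisible11 ab.1 ab.2 ∧ ab.1 ≤ N ∧ ab.2 ≤ N}.ncard : ℝ) := by
      have := Set.ncard_le_ncard hsub (hVfin N)
      rw [Set.ncard_coe_finset] at this
      exact_mod_cast this
    have hN2 : (0:ℝ) < (N:ℝ)^2 := by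
      have : (0:ℝ) < (N:ℝ) := by exact_mod_cast hN
      positivity
    show _ / _ ≤ _ / _
    exact (div_le_div_iff_of_pos_right hN2).mpr hcard
  have hv_le_one : ∀ N, v N ≤ 1 := by
    intro N
    rcases Nat.eq_zero_or_pos N with rfl | hN
    · simp [v]
    have hNR : (0:ℝ) < (N:ℝ) := by exact_mod_cast hN
    have hN2 : (0:ℝ) < (N:ℝ)^2 := by positivity
    have h1 := Set.ncard_le_ncard (hVsub N) (Finset.Icc 1 N ×ˢ Finset.Icc 1 N).finite_toSet
    rw [Set.ncard_coe_finset, Finset.card_product, Nat.card_Icc] at h1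
    simp only [Nat.add_sub_cancel] at h1
    have h2 : ({ab : ℕ × ℕ | FVisible11 ab.1 ab.2 ∧ ab.1 ≤ N ∧ ab.2 ≤ N}.ncard : ℝ)
        ≤ (N:ℝ)^2 := by
      have h3 : {ab : ℕ × ℕ | FVisible11 ab.1 ab.2 ∧ ab.1 ≤ N ∧ ab.2 ≤ N}.ncard ≤ N * N := by
        omega
      calc ({ab : ℕ × ℕ | FVisible11 ab.1 ab.2 ∧ ab.1 ≤ N ∧ ab.2 ≤ N}.ncard : ℝ)
          ≤ ((N * N : ℕ) : ℝ) := by exact_mod_cast h3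
        _ = (N:ℝ)^2 := by push_cast; ring
    show _ / _ ≤ (1:ℝ)
    rw [div_le_one hN2]
    exact h2
  have hL : (∑' n, Stmt3Aux.g n) = Filter.liminf u Filter.atTop := (hu.liminf_eq).symm
  rw [hL]
  exact Filter.liminf_le_liminf (Filter.Eventually.of_forall hle) hu.isBoundedUnder_ge
    ((Filter.isBoundedUnder_of ⟨1, fun N => hv_le_one N⟩).isCoboundedUnder_ge)
end

section
/- Let P ∈ ℤ[x] be a nonzero polynomial whose constant term may be arbitrary and which has at least one irreducible factor of positive degree (equivalently, P is not a nonzero constant). Then the Dirichlet series F(s) = Σ_{ℓ=1}^∞ f_P(ℓ)/ℓ^s converges absolutely for every complex s with Re(s) > 1, where f_P(ℓ) = #{1 ≤ d ≤ ℓ : ℓ divides P(d)}. -/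
open Finset Real Polynomial

lemma aux_pow_le_large (p a : ℕ) (ε : ℝ) (hε : 0 < ε) (hp : 2 ≤ p)
    (h2 : (2:ℝ) ≤ (p:ℝ) ^ ε) : ((a:ℝ) + 1) ≤ (p:ℝ) ^ ((a : ℝ) * ε) := by
  have hp0 : (0:ℝ) ≤ p := by positivity
  have : (p:ℝ) ^ ((a:ℝ) * ε) = ((p:ℝ) ^ ε) ^ (a : ℕ) := by
    rw [mul_comm, Real.rpow_mul hp0, Real.rpow_natCast]
  rw [this]
  calc ((a:ℝ) + 1) ≤ (2:ℝ) ^ a := by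
        exact_mod_cast (Nat.lt_two_pow_self (n := a))
      _ ≤ ((p:ℝ) ^ ε) ^ a := pow_le_pow_left₀ (by norm_num) h2 a

lemma aux_pow_le_small (p a : ℕ) (ε : ℝ) (hε : 0 < ε) (hp : 2 ≤ p) :
    ((a:ℝ) + 1) ≤ max 1 (1 / (ε * Real.log 2)) * (p:ℝ) ^ ((a : ℝ) * ε) := by
  set C : ℝ := max 1 (1 / (ε * Real.log 2)) with hC
  have hlog2 : (0:ℝ) < Real.log 2 := Real.log_pos (by norm_num)
  have hC1 : (1:ℝ) ≤ C := le_max_left _ _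
  have hC2 : 1 / (ε * Real.log 2) ≤ C := le_max_right _ _
  have hCe : 1 ≤ C * (ε * Real.log 2) := by
    have h := mul_le_mul_of_nonneg_right hC2 (by positivity : (0:ℝ) ≤ ε * Real.log 2)
    rwa [div_mul_cancel₀] at h
    positivity
  have hplog : Real.log 2 ≤ Real.log p := by
    apply Real.log_le_log (by norm_num) (by exact_mod_cast hp)
  have key : 1 + (a:ℝ) * (ε * Real.log 2) ≤ (p:ℝ) ^ ((a:ℝ) * ε) := by
    have hp0 : (0:ℝ) < p := by positivity
    rw [Real.rpow_def_of_pos hp0, mul_comm (Real.log _)]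
    calc 1 + (a:ℝ) * (ε * Real.log 2) ≤ 1 + ((a:ℝ) * ε) * Real.log p := by
          nlinarith [mul_nonneg (mul_nonneg (Nat.cast_nonneg (α := ℝ) a) hε.le)
            (sub_nonneg.mpr hplog)]
      _ ≤ Real.exp ((a:ℝ) * ε * Real.log p) := by
          linarith [Real.add_one_le_exp ((a:ℝ) * ε * Real.log p)]
  calc ((a:ℝ) + 1) ≤ C * (1 + (a:ℝ) * (ε * Real.log 2)) := by
        have := Nat.cast_nonneg (α := ℝ) a
        nlinarith
    _ ≤ C * (p:ℝ) ^ ((a:ℝ) * ε) := by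
        apply mul_le_mul_of_nonneg_left key (by linarith)

lemma aux_divisor_bound (ε : ℝ) (hε : 0 < ε) :
    ∃ C : ℝ, 1 ≤ C ∧ ∀ m : ℕ, m ≠ 0 → (m.divisors.card : ℝ) ≤ C * (m:ℝ) ^ ε := by
  classical
  set C0 : ℝ := max 1 (1 / (ε * Real.log 2)) with hC0
  have hC01 : (1:ℝ) ≤ C0 := le_max_left _ _
  set B : ℕ := ⌈(2:ℝ) ^ (1/ε)⌉₊ + 1 with hB
  refine ⟨C0 ^ B, one_le_pow₀ hC01, fun m hm => ?_⟩
  -- factorization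
  have hcard : (m.divisors.card : ℝ) =
      ∏ p ∈ m.primeFactors, ((m.factorization p : ℝ) + 1) := by
    rw [Nat.card_divisors hm]
    push_cast
    rfl
  have hmprod : (m:ℝ) ^ ε =
      ∏ p ∈ m.primeFactors, (p:ℝ) ^ ((m.factorization p : ℝ) * ε) := by
    conv_lhs => rw [← Nat.factorization_prod_pow_eq_self hm]
    rw [Nat.prod_factorization_eq_prod_primeFactors]
    push_cast
    rw [← Real.finset_prod_rpow _ _ (fun p hp => by positivity)]
    apply Finset.prod_congr rfl
    intro p hp
    have hp0 : (0:ℝ) ≤ p := Nat.cast_nonneg p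
    rw [← Real.rpow_natCast (p:ℝ) (m.factorization p), ← Real.rpow_mul hp0]
  -- pointwise bound
  have hptwise : ∀ p ∈ m.primeFactors, ((m.factorization p : ℝ) + 1) ≤
      (if (2:ℝ) ≤ (p:ℝ) ^ ε then 1 else C0) * (p:ℝ) ^ ((m.factorization p : ℝ) * ε) := by
    intro p hp
    have hp2 : 2 ≤ p := (Nat.prime_of_mem_primeFactors hp).two_le
    by_cases h2 : (2:ℝ) ≤ (p:ℝ) ^ ε
    · rw [if_pos h2, one_mul]; exact aux_pow_le_large p (m.factorization p) ε hε hp2 h2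
    · rw [if_neg h2]; exact aux_pow_le_small p (m.factorization p) ε hε hp2
  calc (m.divisors.card : ℝ) ≤
      ∏ p ∈ m.primeFactors,
        ((if (2:ℝ) ≤ (p:ℝ) ^ ε then 1 else C0) * (p:ℝ) ^ ((m.factorization p : ℝ) * ε)) := by
        rw [hcard]
        apply Finset.prod_le_prod (fun p hp => by positivity) hptwise
    _ = (∏ p ∈ m.primeFactors, (if (2:ℝ) ≤ (p:ℝ) ^ ε then 1 else C0)) * (m:ℝ) ^ ε := by
        rw [Finset.prod_mul_distrib, hmprod]
    _ ≤ C0 ^ B * (m:ℝ) ^ ε := by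
        apply mul_le_mul_of_nonneg_right _ (by positivity)
        rw [← Finset.prod_filter_mul_prod_filter_not m.primeFactors
          (fun p : ℕ => (2:ℝ) ≤ (p:ℝ) ^ ε)]
        have h1 : ∏ p ∈ m.primeFactors.filter (fun p : ℕ => (2:ℝ) ≤ (p:ℝ) ^ ε),
            (if (2:ℝ) ≤ (p:ℝ) ^ ε then (1:ℝ) else C0) = 1 := by
          apply Finset.prod_eq_one
          intro p hp
          rw [if_pos (Finset.mem_filter.mp hp).2]
        have h2 : ∏ p ∈ m.primeFactors.filter (fun p : ℕ => ¬ (2:ℝ) ≤ (p:ℝ) ^ ε),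
            (if (2:ℝ) ≤ (p:ℝ) ^ ε then (1:ℝ) else C0) =
            C0 ^ (m.primeFactors.filter (fun p : ℕ => ¬ (2:ℝ) ≤ (p:ℝ) ^ ε)).card := by
          rw [Finset.prod_congr rfl (fun p hp => if_neg (Finset.mem_filter.mp hp).2),
            Finset.prod_const]
        rw [h1, h2, one_mul]
        apply pow_le_pow_right₀ hC01
        calc (m.primeFactors.filter (fun p : ℕ => ¬ (2:ℝ) ≤ (p:ℝ) ^ ε)).card
            ≤ (Finset.range B).card := by
              apply Finset.card_le_card
              intro p hp
              simp only [Finset.mem_filter, not_le] at hp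
              simp only [Finset.mem_range]
              -- p^ε < 2 means p < 2^(1/ε)
              have hplt : (p:ℝ) < (2:ℝ) ^ (1/ε) := by
                have hp0 : (0:ℝ) ≤ p := Nat.cast_nonneg p
                have := Real.rpow_lt_rpow (by positivity) hp.2 (by positivity : 0 < 1/ε)
                rwa [← Real.rpow_mul hp0, mul_one_div, div_self hε.ne',
                  Real.rpow_one] at this
              have : (p:ℝ) ≤ (⌈(2:ℝ) ^ (1/ε)⌉₊ : ℝ) := hplt.le.trans (Nat.le_ceil _)
              have : p ≤ ⌈(2:ℝ) ^ (1/ε)⌉₊ := by exact_mod_cast this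
              omega
            _ = B := Finset.card_range B

lemma aux_poly_growth (P : Polynomial ℤ) :
    ∃ A : ℕ, ∀ d : ℕ, 1 ≤ d → (P.eval (d:ℤ)).natAbs ≤ A * d ^ P.natDegree := by
  set n := P.natDegree with hn
  refine ⟨∑ i ∈ Finset.range (n + 1), (P.coeff i).natAbs, fun d hd => ?_⟩
  rw [Polynomial.eval_eq_sum_range]
  calc (∑ i ∈ Finset.range (n+1), P.coeff i * (d:ℤ)^i).natAbs
      ≤ ∑ i ∈ Finset.range (n+1), (P.coeff i * (d:ℤ)^i).natAbs :=
        nat_abs_sum_le _ _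
    _ = ∑ i ∈ Finset.range (n+1), (P.coeff i).natAbs * d^i := by
        apply Finset.sum_congr rfl
        intro i _
        rw [Int.natAbs_mul, Int.natAbs_pow, Int.natAbs_natCast]
    _ ≤ ∑ i ∈ Finset.range (n+1), (P.coeff i).natAbs * d^n := by
        apply Finset.sum_le_sum
        intro i hi
        exact Nat.mul_le_mul_left _ (Nat.pow_le_pow_right hd
          (by have := Finset.mem_range.mp hi; omega : i ≤ n))
    _ = (∑ i ∈ Finset.range (n+1), (P.coeff i).natAbs) * d^n :=
        (Finset.sum_mul _ _ _).symm

lemma aux_root_count (P : Polynomial ℤ) (hP : P ≠ 0) (S : Finset ℕ) :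
    (S.filter (fun d : ℕ => P.eval (d:ℤ) = 0)).card ≤ P.natDegree := by
  classical
  have h1 : (S.filter (fun d : ℕ => P.eval (d:ℤ) = 0)).card ≤ P.roots.toFinset.card := by
    apply Finset.card_le_card_of_injOn (fun d : ℕ => (d:ℤ))
    · intro d hd
      rw [Finset.mem_coe, Multiset.mem_toFinset, Polynomial.mem_roots hP]
      exact (Finset.mem_filter.mp (Finset.mem_coe.mp hd)).2
    · exact fun a _ b _ h => Nat.cast_injective h
  exact h1.trans ((Multiset.toFinset_card_le _).trans (Polynomial.card_roots' P))

theorem stmt_7 (P : Polynomial ℤ) (hP : P ≠ 0) (hdeg : 0 < P.natDegree)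
    (f : ℕ → ℕ)
    (hf : ∀ ℓ, f ℓ = ((Finset.Icc 1 ℓ).filter
      (fun d : ℕ => (ℓ : ℤ) ∣ P.eval (d : ℤ))).card)
    (s : ℂ) (hs : 1 < s.re) :
    Summable (fun ℓ : ℕ => ‖(f ℓ : ℂ) / (ℓ : ℂ) ^ s‖) := by
  classical
  set σ : ℝ := s.re with hσdef
  set n : ℕ := P.natDegree with hndef
  have hn1 : 1 ≤ n := hdeg
  set ε : ℝ := (σ - 1) / (2 * n) with hεdef
  have hεpos : 0 < ε := div_pos (by linarith) (by positivity)
  set τ : ℝ := (σ + 1) / 2 with hτdef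
  have hτ1 : 1 < τ := by rw [hτdef]; linarith
  have hnε : (n:ℝ) * ε = (σ - 1) / 2 := by
    rw [hεdef]
    have : (n:ℝ) ≠ 0 := by positivity
    field_simp
  obtain ⟨C, hC1, hC⟩ := aux_divisor_bound ε hεpos
  obtain ⟨A, hA⟩ := aux_poly_growth P
  have hsum1 : Summable (fun ℓ : ℕ => ((ℓ:ℝ) ^ σ)⁻¹) :=
    Real.summable_nat_rpow_inv.mpr hs
  have hsum2 : Summable (fun ℓ : ℕ => ((ℓ:ℝ) ^ τ)⁻¹) :=
    Real.summable_nat_rpow_inv.mpr hτ1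
  set K₁ : ℝ := ∑' ℓ : ℕ, ((ℓ:ℝ) ^ σ)⁻¹ with hK₁
  set K₂ : ℝ := ∑' ℓ : ℕ, ((ℓ:ℝ) ^ τ)⁻¹ with hK₂
  have hK₁0 : 0 ≤ K₁ := tsum_nonneg (fun ℓ => by positivity)
  -- norm computation
  have hg : ∀ ℓ : ℕ, ‖(f ℓ : ℂ) / (ℓ : ℂ) ^ s‖ = (f ℓ : ℝ) * ((ℓ:ℝ) ^ σ)⁻¹ := by
    intro ℓ
    rcases Nat.eq_zero_or_pos ℓ with h0 | hpos
    · have hf0 : f 0 = 0 := by rw [hf]; simp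
      subst h0
      rw [hf0]
      simp
    · have hl0 : (0:ℝ) < ℓ := by exact_mod_cast hpos
      rw [norm_div]
      have h1 : ‖((f ℓ : ℕ) : ℂ)‖ = (f ℓ : ℝ) := by
        simp
      have h2 : ‖(ℓ:ℂ) ^ s‖ = (ℓ:ℝ) ^ σ := by
        have : ((ℓ:ℂ)) = (((ℓ:ℝ)):ℂ) := by push_cast; rfl
        rw [this, Complex.norm_cpow_eq_rpow_re_of_pos hl0]
      rw [h1, h2, div_eq_mul_inv]
  apply summable_of_sum_range_le
    (c := (n:ℝ) * K₁ + (C * (A:ℝ) ^ ε) * K₂) (fun ℓ => norm_nonneg _)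
  intro N
  have hfcard : ∀ ℓ ∈ Finset.range N, (f ℓ : ℝ) * ((ℓ:ℝ) ^ σ)⁻¹ =
      ∑ d ∈ Finset.Icc 1 N,
        (if d ≤ ℓ ∧ (ℓ:ℤ) ∣ P.eval (d:ℤ) then ((ℓ:ℝ) ^ σ)⁻¹ else 0) := by
    intro ℓ hℓ
    have hℓN : ℓ < N := Finset.mem_range.mp hℓ
    have hset : (Finset.Icc 1 ℓ).filter (fun d : ℕ => (ℓ:ℤ) ∣ P.eval (d:ℤ)) =
        (Finset.Icc 1 N).filter
          (fun d : ℕ => d ≤ ℓ ∧ (ℓ:ℤ) ∣ P.eval (d:ℤ)) := by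
      ext d
      simp only [Finset.mem_filter, Finset.mem_Icc]
      constructor
      · rintro ⟨⟨h1, h2⟩, h3⟩; exact ⟨⟨h1, by omega⟩, h2, h3⟩
      · rintro ⟨⟨h1, _⟩, h3, h4⟩; exact ⟨⟨h1, h3⟩, h4⟩
    rw [hf ℓ, hset, ← Finset.sum_filter, Finset.sum_const, nsmul_eq_mul]
  calc ∑ ℓ ∈ Finset.range N, ‖(f ℓ : ℂ) / (ℓ : ℂ) ^ s‖
      = ∑ ℓ ∈ Finset.range N, ∑ d ∈ Finset.Icc 1 N,
          (if d ≤ ℓ ∧ (ℓ:ℤ) ∣ P.eval (d:ℤ) then ((ℓ:ℝ) ^ σ)⁻¹ else 0) := by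
        exact Finset.sum_congr rfl (fun ℓ hℓ => by rw [hg ℓ, hfcard ℓ hℓ])
    _ = ∑ d ∈ Finset.Icc 1 N, ∑ ℓ ∈ Finset.range N,
          (if d ≤ ℓ ∧ (ℓ:ℤ) ∣ P.eval (d:ℤ) then ((ℓ:ℝ) ^ σ)⁻¹ else 0) :=
        Finset.sum_comm
    _ ≤ ∑ d ∈ Finset.Icc 1 N,
          (if P.eval (d:ℤ) = 0 then K₁ else (C * (A:ℝ) ^ ε) * ((d:ℝ) ^ τ)⁻¹) := by
        apply Finset.sum_le_sum
        intro d hd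
        have hd1 : 1 ≤ d := (Finset.mem_Icc.mp hd).1
        have hdpos : (0:ℝ) < d := by exact_mod_cast hd1
        by_cases hd0 : P.eval (d:ℤ) = 0
        · rw [if_pos hd0]
          calc ∑ ℓ ∈ Finset.range N,
                (if d ≤ ℓ ∧ (ℓ:ℤ) ∣ P.eval (d:ℤ) then ((ℓ:ℝ) ^ σ)⁻¹ else 0)
              ≤ ∑ ℓ ∈ Finset.range N, ((ℓ:ℝ) ^ σ)⁻¹ := by
                apply Finset.sum_le_sum
                intro ℓ _
                split ; · exact le_rfl
                · positivity
            _ ≤ K₁ := Summable.sum_le_tsum _ (fun ℓ _ => by positivity) hsum1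
        · rw [if_neg hd0]
          set m : ℕ := (P.eval (d:ℤ)).natAbs with hmdef
          have hm0 : m ≠ 0 := Int.natAbs_ne_zero.mpr hd0
          have hsub : (Finset.range N).filter
              (fun ℓ : ℕ => d ≤ ℓ ∧ (ℓ:ℤ) ∣ P.eval (d:ℤ)) ⊆ m.divisors := by
            intro ℓ hℓ
            obtain ⟨hdℓ, hdvd⟩ := (Finset.mem_filter.mp hℓ).2
            rw [Nat.mem_divisors]
            refine ⟨?_, hm0⟩
            have := Int.natAbs_dvd_natAbs.mpr hdvd
            simpa using this
          have hrpow_mono : ((d:ℝ) ^ σ)⁻¹ = ((d:ℝ) ^ σ)⁻¹ := rfl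
          calc ∑ ℓ ∈ Finset.range N,
                (if d ≤ ℓ ∧ (ℓ:ℤ) ∣ P.eval (d:ℤ) then ((ℓ:ℝ) ^ σ)⁻¹ else 0)
              = ∑ ℓ ∈ (Finset.range N).filter
                  (fun ℓ : ℕ => d ≤ ℓ ∧ (ℓ:ℤ) ∣ P.eval (d:ℤ)), ((ℓ:ℝ) ^ σ)⁻¹ :=
                (Finset.sum_filter _ _).symm
            _ ≤ ∑ ℓ ∈ (Finset.range N).filter
                  (fun ℓ : ℕ => d ≤ ℓ ∧ (ℓ:ℤ) ∣ P.eval (d:ℤ)), ((d:ℝ) ^ σ)⁻¹ := by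
                apply Finset.sum_le_sum
                intro ℓ hℓ
                have hdℓ : d ≤ ℓ := ((Finset.mem_filter.mp hℓ).2).1
                have : (d:ℝ) ^ σ ≤ (ℓ:ℝ) ^ σ :=
                  Real.rpow_le_rpow hdpos.le (by exact_mod_cast hdℓ) (by linarith)
                exact inv_anti₀ (by positivity) this
            _ = ((Finset.range N).filter
                  (fun ℓ : ℕ => d ≤ ℓ ∧ (ℓ:ℤ) ∣ P.eval (d:ℤ))).card
                    * ((d:ℝ) ^ σ)⁻¹ := by
                rw [Finset.sum_const, nsmul_eq_mul]
            _ ≤ (m.divisors.card : ℝ) * ((d:ℝ) ^ σ)⁻¹ := by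
                apply mul_le_mul_of_nonneg_right _ (by positivity)
                exact_mod_cast Finset.card_le_card hsub
            _ ≤ (C * (m:ℝ) ^ ε) * ((d:ℝ) ^ σ)⁻¹ :=
                mul_le_mul_of_nonneg_right (hC m hm0) (by positivity)
            _ ≤ (C * ((A:ℝ) ^ ε * (d:ℝ) ^ ((n:ℝ) * ε))) * ((d:ℝ) ^ σ)⁻¹ := by
                apply mul_le_mul_of_nonneg_right _ (by positivity)
                apply mul_le_mul_of_nonneg_left _ (by linarith)
                have hmle : (m:ℝ) ≤ ((A * d ^ n : ℕ) : ℝ) := by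
                  exact_mod_cast hA d hd1
                calc (m:ℝ) ^ ε ≤ (((A * d ^ n : ℕ) : ℝ)) ^ ε :=
                      Real.rpow_le_rpow (by positivity) hmle hεpos.le
                  _ = (A:ℝ) ^ ε * (d:ℝ) ^ ((n:ℝ) * ε) := by
                      push_cast
                      rw [Real.mul_rpow (by positivity) (by positivity),
                        ← Real.rpow_natCast (d:ℝ) n, ← Real.rpow_mul (by positivity)]
            _ = (C * (A:ℝ) ^ ε) * ((d:ℝ) ^ τ)⁻¹ := by
                have key : (d:ℝ) ^ ((n:ℝ) * ε) * ((d:ℝ) ^ σ)⁻¹ = ((d:ℝ) ^ τ)⁻¹ := by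
                  rw [← Real.rpow_neg hdpos.le, ← Real.rpow_neg hdpos.le,
                    ← Real.rpow_add hdpos]
                  congr 1
                  rw [hnε, hτdef]
                  ring
                rw [← key]
                ring
    _ ≤ (n:ℝ) * K₁ + (C * (A:ℝ) ^ ε) * K₂ := by
        rw [← Finset.sum_filter_add_sum_filter_not (Finset.Icc 1 N)
          (fun d : ℕ => P.eval (d:ℤ) = 0)]
        apply add_le_add
        · calc ∑ d ∈ (Finset.Icc 1 N).filter (fun d : ℕ => P.eval (d:ℤ) = 0),
                (if P.eval (d:ℤ) = 0 then K₁ else (C * (A:ℝ) ^ ε) * ((d:ℝ) ^ τ)⁻¹)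
              = ∑ d ∈ (Finset.Icc 1 N).filter (fun d : ℕ => P.eval (d:ℤ) = 0), K₁ := by
                apply Finset.sum_congr rfl
                intro d hd
                rw [if_pos (Finset.mem_filter.mp hd).2]
            _ = ((Finset.Icc 1 N).filter
                  (fun d : ℕ => P.eval (d:ℤ) = 0)).card * K₁ := by
                rw [Finset.sum_const, nsmul_eq_mul]
            _ ≤ (n:ℝ) * K₁ := by
                apply mul_le_mul_of_nonneg_right _ hK₁0
                exact_mod_cast aux_root_count P hP _
        · calc ∑ d ∈ (Finset.Icc 1 N).filter (fun d : ℕ => ¬ P.eval (d:ℤ) = 0),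
                (if P.eval (d:ℤ) = 0 then K₁ else (C * (A:ℝ) ^ ε) * ((d:ℝ) ^ τ)⁻¹)
              = ∑ d ∈ (Finset.Icc 1 N).filter (fun d : ℕ => ¬ P.eval (d:ℤ) = 0),
                  (C * (A:ℝ) ^ ε) * ((d:ℝ) ^ τ)⁻¹ := by
                apply Finset.sum_congr rfl
                intro d hd
                rw [if_neg (Finset.mem_filter.mp hd).2]
            _ = (C * (A:ℝ) ^ ε) * ∑ d ∈ (Finset.Icc 1 N).filter
                  (fun d : ℕ => ¬ P.eval (d:ℤ) = 0), ((d:ℝ) ^ τ)⁻¹ :=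
                (Finset.mul_sum _ _ _).symm
            _ ≤ (C * (A:ℝ) ^ ε) * K₂ := by
                apply mul_le_mul_of_nonneg_left _ (by positivity)
                exact Summable.sum_le_tsum _ (fun d _ => by positivity) hsum2
end

section
/- Let P, Q ∈ ℤ[x] and let p be a prime such that the reductions of P and Q modulo p are coprime in 𝔽_p[x] (in particular, there is no integer d with p dividing both P(d) and Q(d)). Then for every ℓ ≥ 1, the number of roots of the product satisfies f_{PQ}(p^ℓ) = f_P(p^ℓ) + f_Q(p^ℓ), where f_R(m) = #{1 ≤ d ≤ m : m divides R(d)}. -/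
theorem stmt_9 (P Q : Polynomial ℤ) (p : ℕ) (hp : p.Prime)
    (hco : IsCoprime (P.map (Int.castRingHom (ZMod p)))
      (Q.map (Int.castRingHom (ZMod p)))) (ℓ : ℕ) (hℓ : 1 ≤ ℓ) :
    ((Finset.Icc 1 (p ^ ℓ)).filter
        (fun d : ℕ => ((p : ℤ) ^ ℓ) ∣ (P * Q).eval (d : ℤ))).card =
      ((Finset.Icc 1 (p ^ ℓ)).filter
          (fun d : ℕ => ((p : ℤ) ^ ℓ) ∣ P.eval (d : ℤ))).card +
        ((Finset.Icc 1 (p ^ ℓ)).filter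
          (fun d : ℕ => ((p : ℤ) ^ ℓ) ∣ Q.eval (d : ℤ))).card := by
  haveI : Fact p.Prime := ⟨hp⟩
  have hp' : Prime (p : ℤ) := Nat.prime_iff_prime_int.mp hp
  have key : ∀ d : ℤ, ¬ ((p : ℤ) ∣ P.eval d ∧ (p : ℤ) ∣ Q.eval d) := by
    rintro d ⟨h1, h2⟩
    obtain ⟨a, b, hab⟩ := hco
    have e1 : (P.map (Int.castRingHom (ZMod p))).eval ((d : ℤ) : ZMod p) = 0 := by
      rw [Polynomial.eval_map,
        show ((d : ℤ) : ZMod p) = (Int.castRingHom (ZMod p)) d from rfl,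
        Polynomial.eval₂_at_apply]
      exact (ZMod.intCast_zmod_eq_zero_iff_dvd _ p).2 h1
    have e2 : (Q.map (Int.castRingHom (ZMod p))).eval ((d : ℤ) : ZMod p) = 0 := by
      rw [Polynomial.eval_map,
        show ((d : ℤ) : ZMod p) = (Int.castRingHom (ZMod p)) d from rfl,
        Polynomial.eval₂_at_apply]
      exact (ZMod.intCast_zmod_eq_zero_iff_dvd _ p).2 h2
    have := congrArg (Polynomial.eval ((d : ℤ) : ZMod p)) hab
    simp [e1, e2] at this
  have hpl : (p : ℤ) ∣ (p : ℤ) ^ ℓ := dvd_pow_self _ (Nat.one_le_iff_ne_zero.1 hℓ)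
  have hsplit : ∀ d : ℤ, ((p : ℤ) ^ ℓ ∣ (P * Q).eval d) ↔
      ((p : ℤ) ^ ℓ ∣ P.eval d ∨ (p : ℤ) ^ ℓ ∣ Q.eval d) := by
    intro d
    rw [Polynomial.eval_mul]
    constructor
    · intro h
      by_cases hQ : (p : ℤ) ∣ Q.eval d
      · have hP : ¬ (p : ℤ) ∣ P.eval d := fun h' => key d ⟨h', hQ⟩
        exact Or.inr (hp'.pow_dvd_of_dvd_mul_left ℓ hP h)
      · exact Or.inl (hp'.pow_dvd_of_dvd_mul_right ℓ hQ h)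
    · rintro (h | h)
      · exact h.mul_right _
      · exact h.mul_left _
  have hdisj : Disjoint
      ((Finset.Icc 1 (p ^ ℓ)).filter (fun d : ℕ => ((p : ℤ) ^ ℓ) ∣ P.eval (d : ℤ)))
      ((Finset.Icc 1 (p ^ ℓ)).filter (fun d : ℕ => ((p : ℤ) ^ ℓ) ∣ Q.eval (d : ℤ))) := by
    rw [Finset.disjoint_left]
    intro d hd1 hd2
    simp only [Finset.mem_filter] at hd1 hd2
    exact key d ⟨hpl.trans hd1.2, hpl.trans hd2.2⟩
  rw [← Finset.card_union_of_disjoint hdisj, ← Finset.filter_or]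
  congr 1
  apply Finset.filter_congr
  intro d _
  simpa using hsplit (d : ℤ)
end

section
/- Let (a_n, a_{n-1}, …, a_1) be a vector of nonnegative integers with a_n ≠ 0 and gcd(a_n, …, a_1) = 1, set P(x) = a_n x^n + ⋯ + a_1 x, and for N ∈ ℕ let R_N = {(a,b) ∈ ℕ² : 1 ≤ a, b ≤ N} and ℚ_N = { b / P(a) ∈ ℚ : a, b ∈ ℕ, 1 ≤ a, b ≤ N }. Then the number of F(a_n,…,a_1)-visible points in R_N equals the number of distinct rationals in ℚ_N: |V(a_n,…,a_1) ∩ R_N| = |ℚ_N|. -/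
theorem stmt_13 (n : ℕ) (hn : 1 ≤ n) (a : ℕ → ℕ) (han : a n ≠ 0)
    (hgcd : (Finset.Icc 1 n).gcd a = 1)
    (P : ℕ → ℕ) (hP : ∀ x, P x = ∑ i ∈ Finset.Icc 1 n, a i * x ^ i)
    (N : ℕ) :
    {ab : ℕ × ℕ | FVisible P ab.1 ab.2 ∧ ab.1 ≤ N ∧ ab.2 ≤ N}.ncard =
      {q : ℚ | ∃ a₀ b₀ : ℕ, 1 ≤ a₀ ∧ a₀ ≤ N ∧ 1 ≤ b₀ ∧ b₀ ≤ N ∧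
        q = (b₀ : ℚ) / (P a₀ : ℚ)}.ncard := by
  classical
  have hPpos : ∀ x, 1 ≤ x → 0 < P x := by
    intro x hx
    rw [hP]
    have h1 : 0 < a n * x ^ n :=
      Nat.mul_pos (Nat.pos_of_ne_zero han) (pow_pos hx n)
    exact lt_of_lt_of_le h1
      (Finset.single_le_sum (f := fun i => a i * x ^ i) (fun i _ => Nat.zero_le _)
        (Finset.mem_Icc.mpr ⟨hn, le_refl n⟩))
  have hPmono : ∀ x y : ℕ, x ≤ y → P x ≤ P y := by
    intro x y hxy
    rw [hP, hP]
    exact Finset.sum_le_sum fun i _ => Nat.mul_le_mul_left _ (Nat.pow_le_pow_left hxy i)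
  set f : ℕ × ℕ → ℚ := fun ab => (ab.2 : ℚ) / (P ab.1 : ℚ) with hf
  set S := {ab : ℕ × ℕ | FVisible P ab.1 ab.2 ∧ ab.1 ≤ N ∧ ab.2 ≤ N} with hS
  -- the q witness in FVisible is forced to be b / P a
  have hq_eq : ∀ p q : ℚ, ∀ x : ℕ, 1 ≤ x → (p = q * (P x : ℚ)) → q = p / (P x : ℚ) := by
    intro p q x hx h
    have : ((P x : ℚ)) ≠ 0 := by
      exact_mod_cast (hPpos x hx).ne'
    field_simp [h]
    exact h.symm
  have hinj : Set.InjOn f S := by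
    rintro ⟨a₁, b₁⟩ h₁ ⟨a₂, b₂⟩ h₂ heq
    obtain ⟨⟨ha₁, hb₁, q₁, hq₁pos, hq₁, hvis₁⟩, _, _⟩ := h₁
    obtain ⟨⟨ha₂, hb₂, q₂, hq₂pos, hq₂, hvis₂⟩, _, _⟩ := h₂
    have e₁ : q₁ = f (a₁, b₁) := hq_eq _ _ _ ha₁ hq₁
    have e₂ : q₂ = f (a₂, b₂) := hq_eq _ _ _ ha₂ hq₂
    have hqq : q₁ = q₂ := by rw [e₁, e₂, heq]
    have hne1 : ¬ a₁ < a₂ := by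
      intro hlt
      exact hvis₂ a₁ b₁ ha₁ hlt hb₁ (by rw [← hqq]; exact hq₁)
    have hne2 : ¬ a₂ < a₁ := by
      intro hlt
      exact hvis₁ a₂ b₂ ha₂ hlt hb₂ (by rw [hqq]; exact hq₂)
    have haa : a₁ = a₂ := le_antisymm (not_lt.mp hne2) (not_lt.mp hne1)
    have hbb : (b₁ : ℚ) = (b₂ : ℚ) := by
      rw [hq₁, hq₂, hqq, haa]
    exact Prod.ext haa (by exact_mod_cast hbb)
  have himg : {q : ℚ | ∃ a₀ b₀ : ℕ, 1 ≤ a₀ ∧ a₀ ≤ N ∧ 1 ≤ b₀ ∧ b₀ ≤ N ∧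
      q = (b₀ : ℚ) / (P a₀ : ℚ)} = f '' S := by
    ext q
    constructor
    · rintro ⟨a₀, b₀, ha₀1, ha₀N, hb₀1, hb₀N, hq⟩
      have hPa₀ : (0 : ℚ) < (P a₀ : ℚ) := by exact_mod_cast hPpos a₀ ha₀1
      have hqpos : 0 < q := by
        rw [hq]
        exact div_pos (by exact_mod_cast hb₀1) hPa₀
      have hex : ∃ m : ℕ, 1 ≤ m ∧ ∃ c : ℕ, 1 ≤ c ∧ (c : ℚ) = q * (P m : ℚ) :=
        ⟨a₀, ha₀1, b₀, hb₀1, by rw [hq]; field_simp⟩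
      set A := Nat.find hex with hA
      obtain ⟨hA1, c, hc1, hc⟩ := Nat.find_spec hex
      have hAle : A ≤ a₀ := Nat.find_min' hex ⟨ha₀1, b₀, hb₀1, by rw [hq]; field_simp⟩
      have hPA : (P A : ℚ) ≤ (P a₀ : ℚ) := by exact_mod_cast hPmono A a₀ hAle
      have hqb : q * (P a₀ : ℚ) = (b₀ : ℚ) := by rw [hq]; field_simp
      have hcb : (c : ℚ) ≤ (b₀ : ℚ) := by
        calc (c : ℚ) = q * (P A : ℚ) := hc
          _ ≤ q * (P a₀ : ℚ) := mul_le_mul_of_nonneg_left hPA hqpos.le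
          _ = (b₀ : ℚ) := hqb
      have hcN : c ≤ N := le_trans (by exact_mod_cast hcb) hb₀N
      refine ⟨(A, c), ⟨⟨hA1, hc1, q, hqpos, hc, ?_⟩, le_trans hAle ha₀N, hcN⟩, ?_⟩
      · intro a' b' ha'1 hlt hb'1 heq
        exact Nat.find_min hex hlt ⟨ha'1, b', hb'1, heq⟩
      · exact (hq_eq _ _ _ hA1 hc).symm
    · rintro ⟨⟨a₁, b₁⟩, ⟨⟨ha₁, hb₁, _⟩, haN, hbN⟩, rfl⟩
      exact ⟨a₁, b₁, ha₁, haN, hb₁, hbN, rfl⟩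
  rw [himg, Set.ncard_image_of_injOn hinj]
end

section
/- Let (a,b) ∈ ℕ². Then (a,b) is NOT F(1,1)-visible if and only if there exists a natural number a' with 1 ≤ a' < a such that a(a+1)/gcd(a(a+1), a'(a'+1)) divides b. -/
lemma aux_dvd (m n b : ℕ) (hm : m ≠ 0) : m / Nat.gcd m n ∣ b ↔ m ∣ b * n := by
  have hg : 0 < Nat.gcd m n := Nat.gcd_pos_of_pos_left n (Nat.pos_of_ne_zero hm)
  constructor
  · intro h
    have h2 : m / Nat.gcd m n * Nat.gcd m n ∣ b * n :=
      mul_dvd_mul h (Nat.gcd_dvd_right m n)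
    rwa [Nat.div_mul_cancel (Nat.gcd_dvd_left m n)] at h2
  · intro h
    obtain ⟨c, hc⟩ := h
    have hco := Nat.coprime_div_gcd_div_gcd (m := m) (n := n) hg
    have h2 : m / Nat.gcd m n ∣ b * (n / Nat.gcd m n) := by
      refine ⟨c, ?_⟩
      rw [← Nat.mul_div_assoc b (Nat.gcd_dvd_right m n), hc, mul_comm m c,
        Nat.mul_div_assoc c (Nat.gcd_dvd_left m n), mul_comm]
    exact hco.dvd_of_dvd_mul_right h2

theorem stmt_14 (a b : ℕ) (ha : 1 ≤ a) (hb : 1 ≤ b) :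
    ¬ FVisible11 a b ↔
      ∃ a' : ℕ, 1 ≤ a' ∧ a' < a ∧
        (a * (a + 1)) / Nat.gcd (a * (a + 1)) (a' * (a' + 1)) ∣ b := by
  have haQ : (0:ℚ) < (a:ℚ) := by exact_mod_cast ha
  have hq0 : (0:ℚ) < (a:ℚ)^2 + a := by positivity
  have hbQ : (0:ℚ) < (b:ℚ) := by exact_mod_cast hb
  have hm : a * (a + 1) ≠ 0 := by positivity
  constructor
  · intro h
    have hcontra : ¬ ∀ a' b' : ℕ, 1 ≤ a' → a' < a → 1 ≤ b' →
        (b':ℚ) ≠ ((b:ℚ)/((a:ℚ)^2+a)) * ((a':ℚ)^2+a') := by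
      intro hall
      exact h ⟨ha, hb, _, by positivity, by field_simp, hall⟩
    push_neg at hcontra
    obtain ⟨a', b', h1, h2, h3, heq⟩ := hcontra
    refine ⟨a', h1, h2, ?_⟩
    rw [aux_dvd _ _ _ hm]
    have h4 : (b':ℚ) * ((a:ℚ)^2+(a:ℚ)) = (b:ℚ) * ((a':ℚ)^2+(a':ℚ)) := by
      rw [heq]; field_simp
    have h5 : (b * (a'*(a'+1)) : ℕ) = b' * (a*(a+1)) := by
      have : ((b * (a'*(a'+1)):ℕ):ℚ) = ((b' * (a*(a+1)):ℕ):ℚ) := by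
        push_cast; nlinarith [h4]
      exact_mod_cast this
    exact ⟨b', by rw [h5]; ring⟩
  · rintro ⟨a', h1, h2, hdvd⟩ ⟨-, -, q, hqpos, hbq, hall⟩
    rw [aux_dvd _ _ _ hm] at hdvd
    obtain ⟨c, hc⟩ := hdvd
    have hcpos : 0 < c := by
      rcases Nat.eq_zero_or_pos c with h0 | h0
      · exfalso
        rw [h0, mul_zero] at hc
        have : 0 < b * (a' * (a' + 1)) := by positivity
        omega
      · exact h0
    refine hall a' c h1 h2 hcpos ?_
    have hcQ : (b:ℚ) * ((a':ℚ) * (a'+1)) = ((a:ℚ) * (a+1)) * c := by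
      exact_mod_cast congrArg (Nat.cast : ℕ → ℚ) hc
    rw [hbq] at hcQ
    have hX : ((a:ℚ)*((a:ℚ)+1)) ≠ 0 := by positivity
    exact mul_left_cancel₀ hX (by linear_combination -hcQ)
end
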